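/- arXiv:1411.7801 — 6 statements merged into one kernel-verified Lean document; each statement's English description precedes it below -/
import Mathlib

section
/- Assume a breakdown-free Arnoldi decomposition of length j, let Q̄_{j−1} ∈ ℂ^{j×j} be unitary with Q̄_{j−1} H̄_{j−1} = [R_{j−1}; 0_{1×(j−1)}] where R_{j−1} is upper triangular and invertible (for j = 1 take Q̄₀ = 1), let η_j be the (j,j) entry of diag(Q̄_{j−1}, 1)·H̄_j, and set c_j = |η_j|/√(|η_j|² + h_{j+1,j}²) and s_j = h_{j+1,j}/√(|η_j|² + h_{j+1,j}²) (the j-th Givens cosine and sine used in forming the QR factorization of H̄_j). If H_j is invertible, then x_j^{(G)} = c_j² x_j^{(F)} + s_j² x_{j−1}^{(G)}. -/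
open Matrix

noncomputable section

set_option maxHeartbeats 1000000

/-- Squared Euclidean norm of a complex vector. -/
def vnSq {m : Type*} [Fintype m] (v : m → ℂ) : ℝ := ∑ i, Complex.normSq (v i)

/-- Euclidean (2-)norm of a complex vector. -/
def vnorm {m : Type*} [Fintype m] (v : m → ℂ) : ℝ := Real.sqrt (vnSq v)

/-- The four Moore–Penrose conditions: `P` is the Moore-Penrose pseudoinverse of `M`. -/
def IsMoorePenrose {a b : Type*} [Fintype a] [Fintype b]
    (M : Matrix a b ℂ) (P : Matrix b a ℂ) : Prop :=
  M * P * M = M ∧ P * M * P = P ∧ (M * P)ᴴ = M * P ∧ (P * M)ᴴ = P * M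

/-- The Krylov subspace `K_i(A, r) = span {r, A r, …, A^(i-1) r}`. -/
def krylov {n : ℕ} (A : Matrix (Fin n) (Fin n) ℂ) (r : Fin n → ℂ) (i : ℕ) :
    Submodule ℂ (Fin n → ℂ) :=
  Submodule.span ℂ { v | ∃ k < i, v = (A ^ k) *ᵥ r }

/-- The first standard basis vector `e₁ ∈ ℂ^(m+1)`. -/
def e1 (m : ℕ) : Fin (m+1) → ℂ := fun i => if i = 0 then 1 else 0

/-- `y` is the unique minimizer of `‖t - M y'‖₂` over all `y'`. -/
def IsUniqueVecMin {a b : Type*} [Fintype a] [Fintype b]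
    (M : Matrix a b ℂ) (t : a → ℂ) (y : b → ℂ) : Prop :=
  (∀ y', vnSq (t - M *ᵥ y) ≤ vnSq (t - M *ᵥ y')) ∧
  ∀ y', (∀ y'', vnSq (t - M *ᵥ y') ≤ vnSq (t - M *ᵥ y'')) → y' = y

/-- A breakdown-free (single-vector) Arnoldi decomposition of length `j = q + 1`
for the linear system `A x = b` with initial guess `x₀`. -/
structure ArnoldiSV (n q : ℕ) : Type where
  A : Matrix (Fin n) (Fin n) ℂ
  b : Fin n → ℂ
  x0 : Fin n → ℂ
  V : Matrix (Fin n) (Fin (q+2)) ℂ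
  Hbar : Matrix (Fin (q+2)) (Fin (q+1)) ℂ
  hn : q + 2 ≤ n
  r0_ne : b - A *ᵥ x0 ≠ 0
  orth : Vᴴ * V = 1
  v1 : ∀ r, V r 0 = (b - A *ᵥ x0) r / (vnorm (b - A *ᵥ x0) : ℂ)
  span : ∀ i : ℕ, i ≤ q + 2 →
    krylov A (b - A *ᵥ x0) i =
      Submodule.span ℂ { v | ∃ c : Fin (q+2), (c : ℕ) < i ∧ v = fun r => V r c }
  arnoldi : A * V.submatrix id Fin.castSucc = V * Hbar
  hess : ∀ (r : Fin (q+2)) (c : Fin (q+1)), (c : ℕ) + 1 < (r : ℕ) → Hbar r c = 0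
  subdiag : ∀ k : Fin (q+1), 0 < (Hbar k.succ k).re ∧ (Hbar k.succ k).im = 0

namespace ArnoldiSV

variable {n q : ℕ}

/-- The initial residual `r₀ = b - A x₀`. -/
def r0 (D : ArnoldiSV n q) : Fin n → ℂ := D.b - D.A *ᵥ D.x0

/-- `β = ‖r₀‖₂`. -/
def beta (D : ArnoldiSV n q) : ℝ := vnorm D.r0

/-- `H̄_{j-1}`, the leading `j × (j-1)` submatrix of `H̄_j`. -/
def Hprev (D : ArnoldiSV n q) : Matrix (Fin (q+1)) (Fin q) ℂ :=
  D.Hbar.submatrix Fin.castSucc Fin.castSucc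

/-- `H_j`, the leading `j × j` submatrix of `H̄_j`. -/
def Hsq (D : ArnoldiSV n q) : Matrix (Fin (q+1)) (Fin (q+1)) ℂ :=
  D.Hbar.submatrix Fin.castSucc id

/-- `V_j = [v₁ … v_j]`. -/
def Vfull (D : ArnoldiSV n q) : Matrix (Fin n) (Fin (q+1)) ℂ :=
  D.V.submatrix id Fin.castSucc

/-- `V_{j-1} = [v₁ … v_{j-1}]`. -/
def Vprev (D : ArnoldiSV n q) : Matrix (Fin n) (Fin q) ℂ :=
  D.V.submatrix id fun i : Fin q => (i.castSucc.castSucc : Fin (q+2))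

end ArnoldiSV

/-!
Rotate the least squares problem for `H̄_j` by the unitary `diag(Q̄_{j-1}, 1)`: it becomes
`min ‖(τ, 0) - M y‖` with `M = [N; 0 … 0 h]`, `N = Q̄_{j-1} H_j = [[R, *], [0, η]]` and
`τ = Q̄_{j-1} βe₁`. The FOM vector `z` solves `N z = τ`, the previous GMRES vector `w` solves
`R w = τ_{1:j-1}`. For `y = c² z + s² (w, 0)` the rotated residual vanishes except for its last
two entries `s² τ_j` and `-h c² z_j`; since `τ_j = η z_j`, it is orthogonal to the last column
`(*, η, h)` of `M` exactly when `|η|² s² = h² c²`, which is the defining balance of the Givens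
rotation. So `y` satisfies the normal equations and, by uniqueness, is the GMRES vector.
-/

section LeastSquares

variable {a b : Type*} [Fintype a] [Fintype b]

lemma vnSq_eq_norm_sq (v : a → ℂ) : vnSq v = ‖WithLp.toLp 2 v‖ ^ 2 := by
  simp [vnSq, EuclideanSpace.norm_sq_eq, Complex.normSq_eq_norm_sq]

lemma vnSq_add_of_dotProduct_eq_zero {r u : a → ℂ} (h : star u ⬝ᵥ r = 0) :
    vnSq (r + u) = vnSq r + vnSq u := by
  have horth : inner ℂ (WithLp.toLp 2 u) (WithLp.toLp 2 r) = 0 := by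
    rwa [EuclideanSpace.inner_eq_star_dotProduct, dotProduct_comm]
  have := norm_add_sq_eq_norm_sq_add_norm_sq_of_inner_eq_zero _ _ horth
  simp only [vnSq_eq_norm_sq, WithLp.toLp_add, sq] at this ⊢
  rw [add_comm (WithLp.toLp 2 r), this, add_comm]

lemma vnSq_sub_mulVec_le_of_normal_eq (M : Matrix a b ℂ) (t : a → ℂ) {y : b → ℂ}
    (h : Mᴴ *ᵥ (t - M *ᵥ y) = 0) (y' : b → ℂ) :
    vnSq (t - M *ᵥ y) ≤ vnSq (t - M *ᵥ y') := by
  have hsplit : t - M *ᵥ y' = (t - M *ᵥ y) + M *ᵥ (y - y') := by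
    rw [mulVec_sub]; abel
  have horth : star (M *ᵥ (y - y')) ⬝ᵥ (t - M *ᵥ y) = 0 := by
    rw [star_mulVec, ← dotProduct_mulVec, h, dotProduct_zero]
  rw [hsplit, vnSq_add_of_dotProduct_eq_zero horth, le_add_iff_nonneg_right, vnSq_eq_norm_sq]
  positivity

lemma IsUniqueVecMin.eq_of_normal_eq {M : Matrix a b ℂ} {t : a → ℂ} {y y' : b → ℂ}
    (hy : IsUniqueVecMin M t y) (h : Mᴴ *ᵥ (t - M *ᵥ y') = 0) : y' = y :=
  hy.2 y' (vnSq_sub_mulVec_le_of_normal_eq M t h)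

end LeastSquares

lemma conjTranspose_mulVec_residual_of_unitary {α a b : Type*} [CommRing α] [StarRing α]
    [Fintype a] [DecidableEq a] [Fintype b] {Q : Matrix a a α} (hQ : Qᴴ * Q = 1)
    (M : Matrix a b α) (t : a → α) (y : b → α) :
    (Q * M)ᴴ *ᵥ (Q *ᵥ t - (Q * M) *ᵥ y) = Mᴴ *ᵥ (t - M *ᵥ y) := by
  rw [← mulVec_mulVec, ← mulVec_sub, mulVec_mulVec, conjTranspose_mul, Matrix.mul_assoc, hQ,
    Matrix.mul_one]

section BlockDiagOne

variable {α : Type*} {m : ℕ}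

-- `diag(Q, 1)`, spelled exactly as in the main theorem, where it defines `η`.
def blockDiagOne [Zero α] [One α] (Q : Matrix (Fin (m+1)) (Fin (m+1)) α) :
    Matrix (Fin (m+2)) (Fin (m+2)) α :=
  Matrix.of fun r c =>
    if hr : (r : ℕ) < m + 1 then
      (if hc : (c : ℕ) < m + 1 then Q ⟨r, hr⟩ ⟨c, hc⟩ else 0)
    else if (c : ℕ) < m + 1 then 0 else 1

section
variable [Zero α] [One α] (Q : Matrix (Fin (m+1)) (Fin (m+1)) α)

@[simp] lemma blockDiagOne_castSucc_castSucc (r c : Fin (m+1)) :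
    blockDiagOne Q r.castSucc c.castSucc = Q r c := by
  simp only [blockDiagOne, of_apply, Fin.val_castSucc]
  rw [dif_pos r.isLt, dif_pos c.isLt]

@[simp] lemma blockDiagOne_castSucc_last (r : Fin (m+1)) :
    blockDiagOne Q r.castSucc (Fin.last (m+1)) = 0 := by
  simp only [blockDiagOne, of_apply, Fin.val_castSucc, Fin.val_last]
  rw [dif_pos r.isLt, dif_neg (lt_irrefl _)]

@[simp] lemma blockDiagOne_last_castSucc (c : Fin (m+1)) :
    blockDiagOne Q (Fin.last (m+1)) c.castSucc = 0 := by
  simp only [blockDiagOne, of_apply, Fin.val_castSucc, Fin.val_last]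
  rw [dif_neg (lt_irrefl _), if_pos c.isLt]

@[simp] lemma blockDiagOne_last_last :
    blockDiagOne Q (Fin.last (m+1)) (Fin.last (m+1)) = 1 := by
  simp [blockDiagOne]

end

lemma conjTranspose_blockDiagOne_mul_self [Semiring α] [StarRing α]
    {Q : Matrix (Fin (m+1)) (Fin (m+1)) α} (hQ : Qᴴ * Q = 1) :
    (blockDiagOne Q)ᴴ * blockDiagOne Q = 1 := by
  ext r c
  cases r using Fin.lastCases <;> cases c using Fin.lastCases
  · simp [mul_apply, Fin.sum_univ_castSucc]
  · simp [mul_apply, Fin.sum_univ_castSucc, one_apply, (Fin.castSucc_lt_last _).ne']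
  · simp [mul_apply, Fin.sum_univ_castSucc, one_apply, (Fin.castSucc_lt_last _).ne]
  · simpa [mul_apply, Fin.sum_univ_castSucc, one_apply] using congr_fun₂ hQ _ _

lemma blockDiagOne_mul_apply_castSucc {k : Type*} [Fintype k] [NonAssocSemiring α]
    (Q : Matrix (Fin (m+1)) (Fin (m+1)) α) (H : Matrix (Fin (m+2)) k α) (r : Fin (m+1)) (c : k) :
    (blockDiagOne Q * H) r.castSucc c = (Q * H.submatrix Fin.castSucc id) r c := by
  simp [mul_apply, Fin.sum_univ_castSucc]

lemma blockDiagOne_mul_apply_last {k : Type*} [Fintype k] [NonAssocSemiring α]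
    (Q : Matrix (Fin (m+1)) (Fin (m+1)) α) (H : Matrix (Fin (m+2)) k α) (c : k) :
    (blockDiagOne Q * H) (Fin.last (m+1)) c = H (Fin.last (m+1)) c := by
  simp [mul_apply, Fin.sum_univ_castSucc]

lemma blockDiagOne_mulVec_snoc [NonAssocSemiring α] (Q : Matrix (Fin (m+1)) (Fin (m+1)) α)
    (v : Fin (m+1) → α) (x : α) :
    blockDiagOne Q *ᵥ Fin.snoc v x = Fin.snoc (Q *ᵥ v) x := by
  ext r
  cases r using Fin.lastCases <;> simp [mulVec, dotProduct, Fin.sum_univ_castSucc]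

end BlockDiagOne

lemma mulVec_snoc_zero {α k : Type*} [NonUnitalNonAssocSemiring α] {m : ℕ}
    (A : Matrix k (Fin (m+1)) α) (w : Fin m → α) :
    A *ᵥ Fin.snoc w 0 = A.submatrix id Fin.castSucc *ᵥ w := by
  ext r
  simp [mulVec, dotProduct, Fin.sum_univ_castSucc]

lemma smul_e1_succ {S : Type*} [SMulZeroClass S ℂ] (c : S) (m : ℕ) :
    c • e1 (m+1) = Fin.snoc (c • e1 m) 0 := by
  ext r
  cases r using Fin.lastCases <;> simp [e1]

lemma IsUniqueVecMin.mulVec_castSucc_of_qr {m : ℕ} {H : Matrix (Fin (m+1)) (Fin m) ℂ}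
    {t : Fin (m+1) → ℂ} {y : Fin m → ℂ} (hy : IsUniqueVecMin H t y)
    {Q : Matrix (Fin (m+1)) (Fin (m+1)) ℂ} (hQ : Qᴴ * Q = 1)
    {R : Matrix (Fin m) (Fin m) ℂ} (hR : IsUnit R)
    (hQR : Q * H =
      Matrix.of fun (r : Fin (m+1)) (c : Fin m) => if h : (r : ℕ) < m then R ⟨r, h⟩ c else 0)
    (i : Fin m) :
    ((Q * H) *ᵥ y) i.castSucc = (Q *ᵥ t) i.castSucc := by
  have htop : ∀ (v : Fin m → ℂ) (k : Fin m), ((Q * H) *ᵥ v) k.castSucc = (R *ᵥ v) k := by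
    intro v k
    simp [hQR, mulVec, dotProduct]
  have hlast : ∀ c, (Q * H) (Fin.last m) c = 0 := by
    simp [hQR]
  set yhat := R⁻¹ *ᵥ fun k => (Q *ᵥ t) k.castSucc
  have hRyhat : R *ᵥ yhat = fun k => (Q *ᵥ t) k.castSucc := by
    rw [mulVec_mulVec, mul_nonsing_inv _ ((isUnit_iff_isUnit_det R).mp hR), one_mulVec]
  have hnormal : (Q * H)ᴴ *ᵥ (Q *ᵥ t - (Q * H) *ᵥ yhat) = 0 := by
    ext c
    rw [mulVec, dotProduct, Fin.sum_univ_castSucc]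
    simp [htop, hRyhat, hlast]
  have hyhat : yhat = y :=
    hy.eq_of_normal_eq (by rwa [conjTranspose_mulVec_residual_of_unitary hQ] at hnormal)
  rw [← hyhat, htop, hRyhat]

theorem normal_eq_givens_combination {m : ℕ} {N : Matrix (Fin (m+1)) (Fin (m+1)) ℂ}
    (hN : ∀ c : Fin m, N (Fin.last m) c.castSucc = 0)
    {M : Matrix (Fin (m+2)) (Fin (m+1)) ℂ} {h : ℝ}
    (hMtop : ∀ a c, M a.castSucc c = N a c)
    (hMlast : ∀ c : Fin m, M (Fin.last (m+1)) c.castSucc = 0)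
    (hMcorner : M (Fin.last (m+1)) (Fin.last m) = h)
    {τ z : Fin (m+1) → ℂ} {w : Fin m → ℂ} (hz : N *ᵥ z = τ)
    (hw : ∀ i : Fin m, (N *ᵥ Fin.snoc w 0) i.castSucc = τ i.castSucc)
    {γ σ : ℝ} (hγσ : γ + σ = 1)
    (hbal : ‖N (Fin.last m) (Fin.last m)‖ ^ 2 * σ = h ^ 2 * γ) :
    Mᴴ *ᵥ (Fin.snoc τ 0 - M *ᵥ (γ • z + σ • Fin.snoc (α := fun _ => ℂ) w 0)) = 0 := by
  set η := N (Fin.last m) (Fin.last m)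
  set y := γ • z + σ • Fin.snoc (α := fun _ => ℂ) w 0
  set ρ : Fin (m+2) → ℂ := Fin.snoc τ 0 - M *ᵥ y
  set d := τ - N *ᵥ Fin.snoc w 0
  have hd : ∀ i : Fin m, d i.castSucc = 0 := fun i => sub_eq_zero.mpr (hw i).symm
  have hd_last : d (Fin.last m) = η * z (Fin.last m) := by
    have hτ := congrFun hz (Fin.last m)
    simp only [mulVec, dotProduct, Fin.sum_univ_castSucc, hN, zero_mul, Finset.sum_const_zero,
      zero_add] at hτ
    simp [d, mulVec_snoc_zero, mulVec, dotProduct, hN, ← hτ, η]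
  have hρ_top : ∀ a, ρ a.castSucc = σ * d a := by
    intro a
    have hMv : ∀ v, (M *ᵥ v) a.castSucc = (N *ᵥ v) a := fun v => by
      simp [mulVec, dotProduct, hMtop]
    have hγ : (γ : ℂ) = 1 - σ := by rw [eq_sub_iff_add_eq]; exact_mod_cast hγσ
    simp only [ρ, d, y, Pi.sub_apply, Fin.snoc_castSucc, hMv, mulVec_add, mulVec_smul, hz,
      Pi.add_apply, Pi.smul_apply, Complex.real_smul, hγ]
    ring
  have hρ_last : ρ (Fin.last (m+1)) = -(h * (γ * z (Fin.last m))) := by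
    simp [ρ, y, mulVec, dotProduct, Fin.sum_univ_castSucc, hMlast, hMcorner]
  ext c
  rw [mulVec, dotProduct, Fin.sum_univ_castSucc, Fin.sum_univ_castSucc]
  cases c using Fin.lastCases
  · have hconj : starRingEnd ℂ η * η = (‖η‖ : ℂ) ^ 2 := Complex.conj_mul' η
    have hbal' : (‖η‖ : ℂ) ^ 2 * σ = h ^ 2 * γ := by exact_mod_cast hbal
    simp [hρ_top, hρ_last, hd, hd_last, hMtop, hMcorner]
    linear_combination (σ * z (Fin.last m)) * hconj + z (Fin.last m) * hbal'
  · simp [hρ_top, hρ_last, hd, hd_last, hMtop, hMlast, hN]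

namespace ArnoldiSV

variable {n q : ℕ} (D : ArnoldiSV n q)

lemma Hbar_last_castSucc (c : Fin q) : D.Hbar (Fin.last (q+1)) c.castSucc = 0 :=
  D.hess _ _ (by simp)

lemma re_Hbar_last_pos : 0 < (D.Hbar (Fin.last (q+1)) (Fin.last q)).re := by
  simpa using (D.subdiag (Fin.last q)).1

lemma ofReal_re_Hbar_last :
    ((D.Hbar (Fin.last (q+1)) (Fin.last q)).re : ℂ) = D.Hbar (Fin.last (q+1)) (Fin.last q) :=
  Complex.ext rfl (by simpa using ((D.subdiag (Fin.last q)).2).symm)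

end ArnoldiSV

lemma givens_cos_sq_add_sin_sq {η : ℂ} {h : ℝ} (hD : 0 < ‖η‖ ^ 2 + h ^ 2) :
    (‖η‖ / √(‖η‖ ^ 2 + h ^ 2)) ^ 2 + (h / √(‖η‖ ^ 2 + h ^ 2)) ^ 2 = 1 := by
  rw [div_pow, div_pow, Real.sq_sqrt hD.le, ← add_div, div_self hD.ne']

/-- The GMRES iterate is the convex combination
`x_j^(G) = c_j² x_j^(F) + s_j² x_{j-1}^(G)` of the FOM iterate and the previous
GMRES iterate, where `c_j, s_j` are the `j`-th Givens cosine and sine used in forming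
the QR factorization of `H̄_j`, provided `H_j` is invertible. -/
theorem stmt1 {n q : ℕ} (D : ArnoldiSV n q)
    (yj : Fin (q+1) → ℂ) (hyj : IsUniqueVecMin D.Hbar (D.beta • e1 (q+1)) yj)
    (yprev : Fin q → ℂ) (hyprev : IsUniqueVecMin D.Hprev (D.beta • e1 q) yprev)
    (Qbar : Matrix (Fin (q+1)) (Fin (q+1)) ℂ) (R : Matrix (Fin q) (Fin q) ℂ)
    (hQbar_unit : Qbarᴴ * Qbar = 1)
    (hR_inv : IsUnit R)
    (hqr_prev : Qbar * D.Hprev =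
      Matrix.of fun (r : Fin (q+1)) (c : Fin q) => if h : (r : ℕ) < q then R ⟨r, h⟩ c else 0)
    (hHinv : IsUnit D.Hsq) :
    ∀ η : ℂ,
      η = ((Matrix.of fun (r c : Fin (q+2)) =>
              if hr : (r : ℕ) < q + 1 then
                (if hc : (c : ℕ) < q + 1 then Qbar ⟨r, hr⟩ ⟨c, hc⟩ else 0)
              else if (c : ℕ) < q + 1 then 0 else 1) * D.Hbar)
            (⟨q, by omega⟩ : Fin (q+2)) (⟨q, by omega⟩ : Fin (q+1)) →
    ∀ hs : ℝ, hs = (D.Hbar (Fin.last (q+1)) (Fin.last q)).re →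
    ∀ cj sj : ℝ,
      cj = ‖η‖ / Real.sqrt (‖η‖ ^ 2 + hs ^ 2) →
      sj = hs / Real.sqrt (‖η‖ ^ 2 + hs ^ 2) →
      D.x0 + D.Vfull *ᵥ yj
        = (cj ^ 2) • (D.x0 + D.Vfull *ᵥ (D.Hsq⁻¹ *ᵥ (D.beta • e1 q)))
          + (sj ^ 2) • (D.x0 + D.Vprev *ᵥ yprev) := by
  intro η hη hs hhs cj sj hcj hsj
  set N := Qbar * D.Hsq
  have hη' : η = N (Fin.last q) (Fin.last q) :=
    hη.trans (blockDiagOne_mul_apply_castSucc Qbar D.Hbar (Fin.last q) (Fin.last q))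
  have hN : ∀ c : Fin q, N (Fin.last q) c.castSucc = 0 := fun c =>
    (congr_fun₂ hqr_prev (Fin.last q) c).trans (by simp)
  have hz : N *ᵥ (D.Hsq⁻¹ *ᵥ (D.beta • e1 q)) = Qbar *ᵥ (D.beta • e1 q) := by
    rw [← mulVec_mulVec, mulVec_mulVec _ D.Hsq,
      mul_nonsing_inv _ ((isUnit_iff_isUnit_det _).mp hHinv), one_mulVec]
  have hw (i : Fin q) :
      (N *ᵥ Fin.snoc yprev 0) i.castSucc = (Qbar *ᵥ (D.beta • e1 q)) i.castSucc := by
    rw [mulVec_snoc_zero]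
    exact hyprev.mulVec_castSucc_of_qr hQbar_unit hR_inv hqr_prev i
  have hs_pos : 0 < hs := hhs ▸ D.re_Hbar_last_pos
  have hcs : cj ^ 2 + sj ^ 2 = 1 := hcj ▸ hsj ▸ givens_cos_sq_add_sin_sq (by positivity)
  have hbal : ‖η‖ ^ 2 * sj ^ 2 = hs ^ 2 * cj ^ 2 := by rw [hcj, hsj]; ring
  have hnormal := normal_eq_givens_combination hN
    (blockDiagOne_mul_apply_castSucc Qbar D.Hbar)
    (fun c => (blockDiagOne_mul_apply_last Qbar D.Hbar _).trans (D.Hbar_last_castSucc c))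
    ((blockDiagOne_mul_apply_last Qbar D.Hbar _).trans (hhs ▸ D.ofReal_re_Hbar_last).symm)
    hz hw hcs (hη' ▸ hbal)
  rw [← blockDiagOne_mulVec_snoc, ← smul_e1_succ,
    conjTranspose_mulVec_residual_of_unitary (conjTranspose_blockDiagOne_mul_self hQbar_unit)]
    at hnormal
  have hVprev : D.Vprev *ᵥ yprev = D.Vfull *ᵥ Fin.snoc yprev 0 :=
    (mulVec_snoc_zero D.Vfull yprev).symm
  rw [← hyj.eq_of_normal_eq hnormal, hVprev, mulVec_add, mulVec_smul _ (cj ^ 2),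
    mulVec_smul _ (sj ^ 2)]
  linear_combination (norm := module) hcs.symm • D.x0
end
end

section
/- Assume a breakdown-free block Arnoldi decomposition of length j (j ≥ 1), and let Q̄_{j−1} ∈ ℂ^{jL×jL} be unitary with Q̄_{j−1} H̄_{j−1} = [R_{j−1}; 0_{L×(j−1)L}], where R_{j−1} ∈ ℂ^{(j−1)L×(j−1)L} is upper triangular and invertible (for j = 1 take Q̄₀ = I_L). Then there exist a unitary matrix Q_j ∈ ℂ^{(j+1)L×(j+1)L}, equal to the identity outside its trailing principal 2L×2L block, and a unitary matrix Q̂_j^{(b)} ∈ ℂ^{L×L}, such that Q_j·diag(Q̄_{j−1}, I_L)·H̄_j = [R̄_j; 0_{L×jL}] and diag(I_{(j−1)L}, Q̂_j^{(b)})·Q̄_{j−1}·H_j = R̂_j, where R̄_j = [[R_{j−1}, Z_j],[0, N_j]] and R̂_j = [[R_{j−1}, Z_j],[0, N̂_j]] are upper triangular, share the same block Z_j ∈ ℂ^{(j−1)L×L}, and have N_j, N̂_j ∈ ℂ^{L×L} upper triangular; in particular both R-factors have R_{j−1}, the R-factor of H̄_{j−1}, as their upper-left (j−1)L×(j−1)L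 block. -/
open Matrix

noncomputable section

set_option maxHeartbeats 1000000

/-- Squared Frobenius norm of a complex matrix. -/
def frobSq {a b : Type*} [Fintype a] [Fintype b] (M : Matrix a b ℂ) : ℝ :=
  ∑ r, ∑ c, Complex.normSq (M r c)

/-- The block Krylov subspace `𝕂_i(A, F)`: the span of all columns of
`F, A F, …, A^(i-1) F`. -/
def blockKrylov {n L : ℕ} (A : Matrix (Fin n) (Fin n) ℂ)
    (F : Matrix (Fin n) (Fin L) ℂ) (i : ℕ) : Submodule ℂ (Fin n → ℂ) :=
  Submodule.span ℂ { v | ∃ k < i, ∃ c : Fin L, v = fun r => (A ^ k * F) r c }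

/-- `E_L^{[mL]}` : the first `L` columns of the `mL × mL` identity matrix
(block row indexing). -/
def EL (m L : ℕ) : Matrix (Fin m × Fin L) (Fin L) ℂ :=
  Matrix.of fun r c => if (r.1 : ℕ) = 0 ∧ r.2 = c then 1 else 0

/-- An `L × L` matrix is upper triangular. -/
def utL {L : ℕ} (M : Matrix (Fin L) (Fin L) ℂ) : Prop :=
  ∀ a b : Fin L, (b : ℕ) < (a : ℕ) → M a b = 0

/-- A block-indexed `mL × mL` matrix is upper triangular. -/
def utBig {m L : ℕ} (M : Matrix (Fin m × Fin L) (Fin m × Fin L) ℂ) : Prop :=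
  ∀ r c : Fin m × Fin L, (c.1 : ℕ) * L + (c.2 : ℕ) < (r.1 : ℕ) * L + (r.2 : ℕ) → M r c = 0

/-- Stack a block-tall matrix on top of an extra block row. -/
def vcat {m L : ℕ} {col : Type*} (T : Matrix (Fin m × Fin L) col ℂ)
    (Bo : Matrix (Fin L) col ℂ) : Matrix (Fin (m+1) × Fin L) col ℂ :=
  Matrix.of fun r cc => if h : (r.1 : ℕ) < m then T (⟨r.1, h⟩, r.2) cc else Bo r.2 cc

/-- The block matrix `[[R, Z], [0, N]]`. -/
def twoBlock {m L : ℕ} (R : Matrix (Fin m × Fin L) (Fin m × Fin L) ℂ)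
    (Z : Matrix (Fin m × Fin L) (Fin L) ℂ) (N : Matrix (Fin L) (Fin L) ℂ) :
    Matrix (Fin (m+1) × Fin L) (Fin (m+1) × Fin L) ℂ :=
  Matrix.of fun r c =>
    if hr : (r.1 : ℕ) < m then
      if hc : (c.1 : ℕ) < m then R (⟨r.1, hr⟩, r.2) (⟨c.1, hc⟩, c.2)
      else Z (⟨r.1, hr⟩, r.2) c.2
    else
      if (c.1 : ℕ) < m then 0 else N r.2 c.2

/-- The block matrix `[[R, Z], [0, Hmid], [0, Hbot]]`. -/
def threeBlock {m L : ℕ} (R : Matrix (Fin m × Fin L) (Fin m × Fin L) ℂ)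
    (Z : Matrix (Fin m × Fin L) (Fin L) ℂ) (Hmid Hbot : Matrix (Fin L) (Fin L) ℂ) :
    Matrix (Fin (m+2) × Fin L) (Fin (m+1) × Fin L) ℂ :=
  Matrix.of fun r c =>
    if hr : (r.1 : ℕ) < m then
      if hc : (c.1 : ℕ) < m then R (⟨r.1, hr⟩, r.2) (⟨c.1, hc⟩, c.2)
      else Z (⟨r.1, hr⟩, r.2) c.2
    else
      if (c.1 : ℕ) < m then 0
      else if (r.1 : ℕ) = m then Hmid r.2 c.2 else Hbot r.2 c.2

/-- `diag(Q, I_L)` : extend a block-indexed square matrix by an identity block. -/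
def extendOne {m L : ℕ} (Q : Matrix (Fin m × Fin L) (Fin m × Fin L) ℂ) :
    Matrix (Fin (m+1) × Fin L) (Fin (m+1) × Fin L) ℂ :=
  Matrix.of fun r c =>
    if hr : (r.1 : ℕ) < m then
      if hc : (c.1 : ℕ) < m then Q (⟨r.1, hr⟩, r.2) (⟨c.1, hc⟩, c.2) else 0
    else
      if (c.1 : ℕ) < m then 0 else if r.2 = c.2 then 1 else 0

/-- `diag(I_{mL}, Q)` : an identity block, then `Q` in the bottom right corner. -/
def extendBot {m L : ℕ} (Q : Matrix (Fin L) (Fin L) ℂ) :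
    Matrix (Fin (m+1) × Fin L) (Fin (m+1) × Fin L) ℂ :=
  Matrix.of fun r c =>
    if (r.1 : ℕ) < m ∨ (c.1 : ℕ) < m then (if r = c then 1 else 0)
    else Q r.2 c.2

/-- The `(m+2)L × (m+2)L` matrix which is the identity outside of its trailing
principal `2L × 2L` block, which is `[[Q11, Q12], [Q21, Q22]]`. -/
def trailingTwo {m L : ℕ} (Q11 Q12 Q21 Q22 : Matrix (Fin L) (Fin L) ℂ) :
    Matrix (Fin (m+2) × Fin L) (Fin (m+2) × Fin L) ℂ :=
  Matrix.of fun r c =>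
    if (r.1 : ℕ) < m ∨ (c.1 : ℕ) < m then (if r = c then 1 else 0)
    else if (r.1 : ℕ) = m then
      (if (c.1 : ℕ) = m then Q11 r.2 c.2 else Q12 r.2 c.2)
    else
      (if (c.1 : ℕ) = m then Q21 r.2 c.2 else Q22 r.2 c.2)

/-- The block matrix `[R ; 0]` (one extra zero block row below `R`). -/
def stackZero {m L : ℕ} (R : Matrix (Fin m × Fin L) (Fin m × Fin L) ℂ) :
    Matrix (Fin (m+1) × Fin L) (Fin m × Fin L) ℂ :=
  Matrix.of fun r c => if h : (r.1 : ℕ) < m then R (⟨r.1, h⟩, r.2) c else 0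

/-- A breakdown-free block Arnoldi decomposition of length `j = p + 1` for the block
linear system `A X = B` with initial guess `X₀` (block size `L`). -/
structure BlockArnoldi (n L p : ℕ) : Type where
  A : Matrix (Fin n) (Fin n) ℂ
  B : Matrix (Fin n) (Fin L) ℂ
  X0 : Matrix (Fin n) (Fin L) ℂ
  W : Matrix (Fin n) (Fin (p+2) × Fin L) ℂ
  S0 : Matrix (Fin L) (Fin L) ℂ
  Hbar : Matrix (Fin (p+2) × Fin L) (Fin (p+1) × Fin L) ℂ
  hL : 1 ≤ L
  hn : (p+2) * L ≤ n
  F0_rank : (B - A * X0).rank = L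
  orth : Wᴴ * W = 1
  S0_ut : utL S0
  S0_inv : IsUnit S0
  F0_eq : B - A * X0 = (W.submatrix id fun c : Fin L => ((0 : Fin (p+2)), c)) * S0
  span : ∀ i : ℕ, i ≤ p + 2 →
    blockKrylov A (B - A * X0) i =
      Submodule.span ℂ { v | ∃ c : Fin (p+2) × Fin L, (c.1 : ℕ) < i ∧ v = fun r => W r c }
  arnoldi : A * W.submatrix id (Prod.map Fin.castSucc id) = W * Hbar
  hess : ∀ r c, (c.1 : ℕ) + 1 < (r.1 : ℕ) → Hbar r c = 0
  sub_ut : ∀ (k : Fin (p+1)) (a b : Fin L), (b : ℕ) < (a : ℕ) → Hbar (k.succ, a) (k, b) = 0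
  sub_inv : ∀ k : Fin (p+1), IsUnit (Matrix.of fun a b : Fin L => Hbar (k.succ, a) (k, b))

namespace BlockArnoldi

variable {n L p : ℕ}

/-- `H̄_{j-1}`, the leading `jL × (j-1)L` submatrix of `H̄_j`. -/
def Hprev (D : BlockArnoldi n L p) : Matrix (Fin (p+1) × Fin L) (Fin p × Fin L) ℂ :=
  D.Hbar.submatrix (Prod.map Fin.castSucc id) (Prod.map Fin.castSucc id)

/-- `H_j`, the leading `jL × jL` submatrix of `H̄_j`. -/
def Hsq (D : BlockArnoldi n L p) : Matrix (Fin (p+1) × Fin L) (Fin (p+1) × Fin L) ℂ :=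
  D.Hbar.submatrix (Prod.map Fin.castSucc id) id

/-- `W_j = [V₁ … V_j]`. -/
def Wfull (D : BlockArnoldi n L p) : Matrix (Fin n) (Fin (p+1) × Fin L) ℂ :=
  D.W.submatrix id (Prod.map Fin.castSucc id)

/-- `W_{j-1} = [V₁ … V_{j-1}]`. -/
def Wprev (D : BlockArnoldi n L p) : Matrix (Fin n) (Fin p × Fin L) ℂ :=
  D.W.submatrix id (Prod.map (fun i : Fin p => (i.castSucc.castSucc : Fin (p+2))) id)

/-- `V_j`, the `j`-th block Arnoldi vector. -/
def Vj (D : BlockArnoldi n L p) : Matrix (Fin n) (Fin L) ℂ :=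
  D.W.submatrix id fun c : Fin L => (((Fin.last p).castSucc : Fin (p+2)), c)

end BlockArnoldi

/-- `Y` is the unique minimizer of `‖Hb • Y' - T‖_F` over all `Y'`. -/
def IsUniqueFrobMin {a b c : Type*} [Fintype a] [Fintype b] [Fintype c]
    (Hb : Matrix a b ℂ) (T : Matrix a c ℂ) (Y : Matrix b c ℂ) : Prop :=
  (∀ Y', frobSq (Hb * Y - T) ≤ frobSq (Hb * Y' - T)) ∧
  ∀ Y', (∀ Y'', frobSq (Hb * Y' - T) ≤ frobSq (Hb * Y'' - T)) → Y' = Y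

/-- `Y_j^{(G)}` is the solution of the `j`-th block GMRES least-squares subproblem. -/
def IsBlockGMRESj {n L p : ℕ} (D : BlockArnoldi n L p)
    (Y : Matrix (Fin (p+1) × Fin L) (Fin L) ℂ) : Prop :=
  IsUniqueFrobMin D.Hbar (EL (p+2) L * D.S0) Y

/-- `Y_{j-1}^{(G)}` is the solution of the `(j-1)`-st block GMRES least-squares
subproblem. -/
def IsBlockGMRESprev {n L p : ℕ} (D : BlockArnoldi n L p)
    (Y : Matrix (Fin p × Fin L) (Fin L) ℂ) : Prop :=
  IsUniqueFrobMin D.Hprev (EL (p+1) L * D.S0) Y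

/-- The QR setup at step `j = p+1` : a QR factorization `Q̄_{j-1} H̄_{j-1} = [R_{j-1}; 0]`
from the previous step, the induced splitting
`diag(Q̄_{j-1}, I_L)·H̄_j = [[R,Z],[0,Ĥ_{jj}],[0,H_{j+1,j}]]`, the unitary `Q_j`
(identity outside its trailing principal `2L×2L` block) completing the
QR factorization of `H̄_j`, and the unitary `Q̂_j^{(b)}` triangularizing `Ĥ_{jj}`. -/
structure QRSetup (L p : ℕ) (Hbar : Matrix (Fin (p+2) × Fin L) (Fin (p+1) × Fin L) ℂ)
    (S0 : Matrix (Fin L) (Fin L) ℂ) : Type where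
  Qbar : Matrix (Fin (p+1) × Fin L) (Fin (p+1) × Fin L) ℂ
  R : Matrix (Fin p × Fin L) (Fin p × Fin L) ℂ
  Z : Matrix (Fin p × Fin L) (Fin L) ℂ
  Hhat : Matrix (Fin L) (Fin L) ℂ
  Hsub : Matrix (Fin L) (Fin L) ℂ
  Q11 : Matrix (Fin L) (Fin L) ℂ
  Q12 : Matrix (Fin L) (Fin L) ℂ
  Q21 : Matrix (Fin L) (Fin L) ℂ
  Q22 : Matrix (Fin L) (Fin L) ℂ
  N : Matrix (Fin L) (Fin L) ℂ
  Qhatb : Matrix (Fin L) (Fin L) ℂ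
  Nhat : Matrix (Fin L) (Fin L) ℂ
  Qbar_unit : Qbarᴴ * Qbar = 1
  Qbar_base : p = 0 → Qbar = 1
  R_ut : utBig R
  R_inv : IsUnit R
  qr_prev : Qbar * Hbar.submatrix (Prod.map Fin.castSucc id) (Prod.map Fin.castSucc id)
      = stackZero R
  qr_split : extendOne Qbar * Hbar = threeBlock R Z Hhat Hsub
  Qj_unit : (trailingTwo (m := p) Q11 Q12 Q21 Q22)ᴴ * trailingTwo (m := p) Q11 Q12 Q21 Q22 = 1
  qr_full : trailingTwo (m := p) Q11 Q12 Q21 Q22 * (extendOne Qbar * Hbar)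
      = threeBlock R Z N 0
  N_ut : utL N
  N_inv : IsUnit N
  Qhatb_unit : Qhatbᴴ * Qhatb = 1
  Nhat_def : Nhat = Qhatb * Hhat
  Nhat_ut : utL Nhat

namespace QRSetup

variable {L p : ℕ} {Hbar : Matrix (Fin (p+2) × Fin L) (Fin (p+1) × Fin L) ℂ}
  {S0 : Matrix (Fin L) (Fin L) ℂ}

/-- `C̃_j` : the last `L` rows of `Q̄_{j-1} E_L^{[jL]} S₀`. -/
def Ct (S : QRSetup L p Hbar S0) : Matrix (Fin L) (Fin L) ℂ :=
  Matrix.of fun a b => (S.Qbar * (EL (p+1) L * S0)) ((Fin.last p), a) b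

/-- `C_j := Q_j^{(11)} C̃_j`. -/
def C (S : QRSetup L p Hbar S0) : Matrix (Fin L) (Fin L) ℂ := S.Q11 * S.Ct

/-- `Ĉ_j := Q̂_j^{(b)} C̃_j`. -/
def Chat (S : QRSetup L p Hbar S0) : Matrix (Fin L) (Fin L) ℂ := S.Qhatb * S.Ct

end QRSetup

/-!
Block upper Hessenberg structure means that `diag(Q̄_{j-1}, I_L) H̄_j` is already triangular
outside its last block column: it equals `[[R_{j-1}, Z_j], [0, Ĥ_j], [0, H_{j+1,j}]]`, and its
first `j` block rows are `Q̄_{j-1} H_j = [[R_{j-1}, Z_j], [0, Ĥ_j]]`. A QR factorization of the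
`2L × L` block `[Ĥ_j; H_{j+1,j}]` gives `Q_j`, one of `Ĥ_j` gives `Q̂_j^{(b)}`, and both exist by
Gram–Schmidt. As they only act on the trailing block rows, `R_{j-1}` and `Z_j` are left intact.
-/

namespace Matrix

variable {𝕜 : Type*} [RCLike 𝕜]

theorem exists_mem_unitaryGroup_mul_blockTriangular {ι : Type*} [Fintype ι] [LinearOrder ι]
    [LocallyFiniteOrderBot ι] (M : Matrix ι ι 𝕜) :
    ∃ Q ∈ unitaryGroup ι 𝕜, (Q * M).BlockTriangular id := by
  let col : ι → EuclideanSpace 𝕜 ι := fun j => WithLp.toLp 2 (Mᵀ j)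
  let b := InnerProductSpace.gramSchmidtOrthonormalBasis finrank_euclideanSpace col
  let Q := b.toBasis.toMatrix (EuclideanSpace.basisFun ι 𝕜)
  refine ⟨Q, b.toMatrix_orthonormalBasis_mem_unitary _, fun i j hji => ?_⟩
  calc (Q * M) i j = (Q *ᵥ (EuclideanSpace.basisFun ι 𝕜).toBasis.repr (col j)) i := rfl
    _ = b.repr (col j) i := congrFun ((EuclideanSpace.basisFun ι 𝕜).toBasis.toMatrix_mulVec_repr
        (b' := b.toBasis) (col j)) i
    _ = 0 := InnerProductSpace.gramSchmidtOrthonormalBasis_inv_triangular' _ col hji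

theorem exists_mem_unitaryGroup_mul_fromRows_eq {m m' : Type*}
    [Fintype m] [LinearOrder m] [LocallyFiniteOrderBot m]
    [Fintype m'] [LinearOrder m'] [LocallyFiniteOrderBot m']
    (A : Matrix m m 𝕜) (B : Matrix m' m 𝕜) :
    ∃ Q ∈ unitaryGroup (m ⊕ m') 𝕜, ∃ N : Matrix m m 𝕜,
      N.BlockTriangular id ∧ Q * fromRows A B = fromRows N 0 := by
  -- triangularize the square matrix `[[A, 0], [B, 0]]` for the lexicographic order on `m ⊕ m'`
  obtain ⟨Q, hQ, htri⟩ : ∃ Q ∈ unitaryGroup (m ⊕ m') 𝕜,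
      (Q * fromCols (fromRows A B) 0).BlockTriangular toLex :=
    exists_mem_unitaryGroup_mul_blockTriangular (ι := m ⊕ₗ m') _
  have hcol (r : m ⊕ m') (j : m) :
      (Q * fromCols (fromRows A B) (0 : Matrix (m ⊕ m') m' 𝕜)) r (Sum.inl j)
        = (Q * fromRows A B) r j := by
    rw [mul_fromCols]
    rfl
  refine ⟨Q, hQ, (Q * fromRows A B).toRows₁, fun i j hji => ?_, ?_⟩
  · rw [toRows₁_apply, ← hcol]
    exact htri (Sum.Lex.inl_lt_inl_iff.2 hji)
  · rw [← fromRows_toRows (Q * fromRows A B)]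
    congr 1
    ext i j
    rw [toRows₂_apply, ← hcol]
    exact htri (Sum.Lex.inl_lt_inr j i)

theorem submatrix_equiv_inj {α l m n o : Type*} {M N : Matrix m n α} (e₁ : l ≃ m)
    (e₂ : o ≃ n) : M.submatrix e₁ e₂ = N.submatrix e₁ e₂ ↔ M = N :=
  ⟨fun h => by simpa using congrArg (·.submatrix e₁.symm e₂.symm) h, by rintro rfl; rfl⟩

end Matrix

/- The block matrices above are defined entry by entry; reindexing along the following
splittings of the block index turns identities between them into `fromBlocks` algebra. -/

def lastBlockSplit (m L : ℕ) : (Fin m × Fin L) ⊕ Fin L ≃ Fin (m + 1) × Fin L :=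
  ((Equiv.sumCongr (Equiv.refl _) (Equiv.uniqueProd (Fin L) (Fin 1)).symm).trans
    (Equiv.sumProdDistrib _ _ _).symm).trans (Equiv.prodCongr finSumFinEquiv (Equiv.refl _))

def lastTwoBlocksSplit (m L : ℕ) : (Fin m × Fin L) ⊕ (Fin L ⊕ Fin L) ≃ Fin (m + 2) × Fin L :=
  (Equiv.sumAssoc _ _ _).symm.trans
    ((Equiv.sumCongr (lastBlockSplit m L) (Equiv.refl _)).trans (lastBlockSplit (m + 1) L))

section BlockForms

variable {m L : ℕ}

@[simp] lemma lastBlockSplit_inl (k : Fin m × Fin L) :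
    lastBlockSplit m L (Sum.inl k) = (k.1.castSucc, k.2) := rfl

@[simp] lemma lastBlockSplit_inr (a : Fin L) :
    lastBlockSplit m L (Sum.inr a) = (Fin.last m, a) := rfl

@[simp] lemma lastTwoBlocksSplit_inl (k : Fin m × Fin L) :
    lastTwoBlocksSplit m L (Sum.inl k) = (k.1.castSucc.castSucc, k.2) := rfl

@[simp] lemma lastTwoBlocksSplit_inr_inl (a : Fin L) :
    lastTwoBlocksSplit m L (Sum.inr (Sum.inl a)) = ((Fin.last m).castSucc, a) := rfl

@[simp] lemma lastTwoBlocksSplit_inr_inr (a : Fin L) :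
    lastTwoBlocksSplit m L (Sum.inr (Sum.inr a)) = (Fin.last (m + 1), a) := rfl

lemma twoBlock_submatrix_lastBlockSplit (R : Matrix (Fin m × Fin L) (Fin m × Fin L) ℂ)
    (Z : Matrix (Fin m × Fin L) (Fin L) ℂ) (N : Matrix (Fin L) (Fin L) ℂ) :
    (twoBlock R Z N).submatrix (lastBlockSplit m L) (lastBlockSplit m L)
      = fromBlocks R Z 0 N := by
  ext (k | a) (k' | b) <;> simp [twoBlock]

lemma twoBlock_submatrix_id_lastBlockSplit (R : Matrix (Fin m × Fin L) (Fin m × Fin L) ℂ)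
    (Z : Matrix (Fin m × Fin L) (Fin L) ℂ) (N : Matrix (Fin L) (Fin L) ℂ) :
    (twoBlock R Z N).submatrix id (lastBlockSplit m L) = fromCols (stackZero R) (vcat Z N) := by
  ext ⟨i, a⟩ (k' | b) <;> simp [twoBlock, stackZero, vcat]

lemma threeBlock_submatrix_lastBlockSplit (R : Matrix (Fin m × Fin L) (Fin m × Fin L) ℂ)
    (Z : Matrix (Fin m × Fin L) (Fin L) ℂ) (Hmid Hbot : Matrix (Fin L) (Fin L) ℂ) :
    (threeBlock R Z Hmid Hbot).submatrix (lastBlockSplit (m + 1) L) (lastBlockSplit m L)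
      = fromBlocks (stackZero R) (vcat Z Hmid) 0 Hbot := by
  ext (⟨i, a⟩ | a) (k' | b)
  · simp [threeBlock, stackZero]
  · induction i using Fin.lastCases <;> simp [threeBlock, vcat]
  all_goals simp [threeBlock]

lemma threeBlock_submatrix_lastTwoBlocksSplit (R : Matrix (Fin m × Fin L) (Fin m × Fin L) ℂ)
    (Z : Matrix (Fin m × Fin L) (Fin L) ℂ) (Hmid Hbot : Matrix (Fin L) (Fin L) ℂ) :
    (threeBlock R Z Hmid Hbot).submatrix (lastTwoBlocksSplit m L) (lastBlockSplit m L)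
      = fromBlocks R Z 0 (fromRows Hmid Hbot) := by
  ext (k | a | a) (k' | b) <;> simp [threeBlock]

lemma extendOne_submatrix_lastBlockSplit (Q : Matrix (Fin m × Fin L) (Fin m × Fin L) ℂ) :
    (extendOne Q).submatrix (lastBlockSplit m L) (lastBlockSplit m L) = fromBlocks Q 0 0 1 := by
  ext (k | a) (k' | b) <;> simp [extendOne, one_apply]

lemma extendBot_submatrix_lastBlockSplit (Q : Matrix (Fin L) (Fin L) ℂ) :
    (extendBot (m := m) Q).submatrix (lastBlockSplit m L) (lastBlockSplit m L)
      = fromBlocks 1 0 0 Q := by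
  ext (k | a) (k' | b) <;> simp [extendBot, one_apply, Prod.ext_iff, Fin.ext_iff] <;> omega

lemma trailingTwo_submatrix_lastTwoBlocksSplit (Q11 Q12 Q21 Q22 : Matrix (Fin L) (Fin L) ℂ) :
    (trailingTwo (m := m) Q11 Q12 Q21 Q22).submatrix (lastTwoBlocksSplit m L)
      (lastTwoBlocksSplit m L) = fromBlocks 1 0 0 (fromBlocks Q11 Q12 Q21 Q22) := by
  ext (k | a | a) (k' | b | b) <;>
    simp [trailingTwo, one_apply, Prod.ext_iff, Fin.ext_iff] <;> omega

end BlockForms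

section BlockAlgebra

variable {m L : ℕ}

lemma utL_iff_blockTriangular (N : Matrix (Fin L) (Fin L) ℂ) : utL N ↔ N.BlockTriangular id :=
  ⟨fun h _ _ hji => h _ _ hji, fun h _ _ hba => h hba⟩

lemma utBig_twoBlock {R : Matrix (Fin m × Fin L) (Fin m × Fin L) ℂ}
    (Z : Matrix (Fin m × Fin L) (Fin L) ℂ) {N : Matrix (Fin L) (Fin L) ℂ}
    (hR : utBig R) (hN : utL N) : utBig (twoBlock R Z N) := by
  intro r c
  obtain ⟨k | a, rfl⟩ := (lastBlockSplit m L).surjective r <;>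
  obtain ⟨k' | b, rfl⟩ := (lastBlockSplit m L).surjective c <;>
  intro h <;>
  simp only [lastBlockSplit_inl, lastBlockSplit_inr, Fin.val_castSucc, Fin.val_last] at h
  · simpa [twoBlock] using hR k k' h
  · have : (k.1 + 1 : ℕ) * L ≤ m * L := Nat.mul_le_mul_right L k.1.isLt
    nlinarith [k.2.isLt]
  · simp [twoBlock]
  · simpa [twoBlock] using hN a b (by omega)

theorem trailingTwo_mem_unitaryGroup {Q : Matrix (Fin L ⊕ Fin L) (Fin L ⊕ Fin L) ℂ}
    (hQ : Q ∈ unitaryGroup (Fin L ⊕ Fin L) ℂ) :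
    trailingTwo (m := m) Q.toBlocks₁₁ Q.toBlocks₁₂ Q.toBlocks₂₁ Q.toBlocks₂₂
      ∈ unitaryGroup (Fin (m + 2) × Fin L) ℂ := by
  rw [mem_unitaryGroup_iff', star_eq_conjTranspose] at hQ ⊢
  rw [← submatrix_equiv_inj (lastTwoBlocksSplit m L) (lastTwoBlocksSplit m L),
    ← submatrix_mul_equiv _ _ _ (lastTwoBlocksSplit m L), ← conjTranspose_submatrix,
    trailingTwo_submatrix_lastTwoBlocksSplit, fromBlocks_toBlocks, fromBlocks_conjTranspose,
    fromBlocks_multiply, hQ, submatrix_one_equiv]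
  simp

lemma trailingTwo_mul_threeBlock {Q11 Q12 Q21 Q22 Hmid Hbot N N' : Matrix (Fin L) (Fin L) ℂ}
    (R : Matrix (Fin m × Fin L) (Fin m × Fin L) ℂ) (Z : Matrix (Fin m × Fin L) (Fin L) ℂ)
    (h : fromBlocks Q11 Q12 Q21 Q22 * fromRows Hmid Hbot = fromRows N N') :
    trailingTwo (m := m) Q11 Q12 Q21 Q22 * threeBlock R Z Hmid Hbot = threeBlock R Z N N' := by
  rw [← submatrix_equiv_inj (lastTwoBlocksSplit m L) (lastBlockSplit m L),
    ← submatrix_mul_equiv _ _ _ (lastTwoBlocksSplit m L),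
    trailingTwo_submatrix_lastTwoBlocksSplit, threeBlock_submatrix_lastTwoBlocksSplit,
    threeBlock_submatrix_lastTwoBlocksSplit, fromBlocks_multiply, h]
  simp

lemma extendBot_mul_twoBlock (Q : Matrix (Fin L) (Fin L) ℂ)
    (R : Matrix (Fin m × Fin L) (Fin m × Fin L) ℂ) (Z : Matrix (Fin m × Fin L) (Fin L) ℂ)
    (N : Matrix (Fin L) (Fin L) ℂ) :
    extendBot (m := m) Q * twoBlock R Z N = twoBlock R Z (Q * N) := by
  rw [← submatrix_equiv_inj (lastBlockSplit m L) (lastBlockSplit m L),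
    ← submatrix_mul_equiv _ _ _ (lastBlockSplit m L), extendBot_submatrix_lastBlockSplit,
    twoBlock_submatrix_lastBlockSplit, twoBlock_submatrix_lastBlockSplit, fromBlocks_multiply]
  simp

lemma exists_extendOne_mul_eq_threeBlock
    (Q : Matrix (Fin (m + 1) × Fin L) (Fin (m + 1) × Fin L) ℂ)
    (H : Matrix (Fin (m + 2) × Fin L) (Fin (m + 1) × Fin L) ℂ)
    {R : Matrix (Fin m × Fin L) (Fin m × Fin L) ℂ}
    (hH : ∀ (k : Fin m) (a b : Fin L), H (Fin.last (m + 1), a) (k.castSucc, b) = 0)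
    (hQR : Q * H.submatrix (Prod.map Fin.castSucc id) (Prod.map Fin.castSucc id) = stackZero R) :
    ∃ (Z : Matrix (Fin m × Fin L) (Fin L) ℂ) (Hmid : Matrix (Fin L) (Fin L) ℂ),
      Q * H.submatrix (Prod.map Fin.castSucc id) id = twoBlock R Z Hmid ∧
      extendOne Q * H = threeBlock R Z Hmid
        (H.submatrix (fun a => (Fin.last (m + 1), a)) (fun b => (Fin.last m, b))) := by
  set Hprev := H.submatrix (Prod.map Fin.castSucc id) (Prod.map Fin.castSucc id)
  set C := H.submatrix (Prod.map Fin.castSucc id) (fun b => (Fin.last m, b))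
  set Hbot := H.submatrix (fun a => (Fin.last (m + 1), a)) (fun b => (Fin.last m, b))
  have hcols : H.submatrix (Prod.map Fin.castSucc id) (lastBlockSplit m L) = fromCols Hprev C := by
    ext r (k | b) <;> rfl
  have hblocks : H.submatrix (lastBlockSplit (m + 1) L) (lastBlockSplit m L)
      = fromBlocks Hprev C 0 Hbot := by
    ext (k | a) (k' | b)
    exacts [rfl, rfl, hH k'.1 a k'.2, rfl]
  set Z : Matrix (Fin m × Fin L) (Fin L) ℂ := Matrix.of fun k b => (Q * C) (k.1.castSucc, k.2) b
  set Hmid : Matrix (Fin L) (Fin L) ℂ := Matrix.of fun a b => (Q * C) (Fin.last m, a) b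
  have hvcat : Q * C = vcat Z Hmid := by
    ext ⟨i, a⟩ b
    induction i using Fin.lastCases <;> simp [vcat, Z, Hmid]
  refine ⟨Z, Hmid, ?_, ?_⟩
  · rw [← submatrix_equiv_inj (Equiv.refl _) (lastBlockSplit m L), Equiv.coe_refl,
      twoBlock_submatrix_id_lastBlockSplit, ← hQR, ← hvcat, ← mul_fromCols, ← hcols]
    rfl
  · rw [← submatrix_equiv_inj (lastBlockSplit (m + 1) L) (lastBlockSplit m L),
      ← submatrix_mul_equiv _ _ _ (lastBlockSplit (m + 1) L), extendOne_submatrix_lastBlockSplit,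
      hblocks, threeBlock_submatrix_lastBlockSplit, fromBlocks_multiply, hQR, hvcat]
    simp

end BlockAlgebra

theorem stmt3_general {n L p : ℕ} (D : BlockArnoldi n L p)
    (Qbar : Matrix (Fin (p+1) × Fin L) (Fin (p+1) × Fin L) ℂ)
    (R : Matrix (Fin p × Fin L) (Fin p × Fin L) ℂ)
    (hR_ut : utBig R)
    (hqr_prev : Qbar * D.Hprev = stackZero R) :
    ∃ (Q11 Q12 Q21 Q22 Qhb : Matrix (Fin L) (Fin L) ℂ)
      (Z : Matrix (Fin p × Fin L) (Fin L) ℂ) (N Nh : Matrix (Fin L) (Fin L) ℂ),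
      (trailingTwo (m := p) Q11 Q12 Q21 Q22)ᴴ * trailingTwo (m := p) Q11 Q12 Q21 Q22 = 1 ∧
      Qhbᴴ * Qhb = 1 ∧
      trailingTwo (m := p) Q11 Q12 Q21 Q22 * (extendOne Qbar * D.Hbar) = threeBlock R Z N 0 ∧
      extendBot (m := p) Qhb * (Qbar * D.Hsq) = twoBlock R Z Nh ∧
      utL N ∧ utL Nh ∧ utBig (twoBlock R Z N) ∧ utBig (twoBlock R Z Nh) := by
  obtain ⟨Z, Hmid, hsq, hbar⟩ := exists_extendOne_mul_eq_threeBlock Qbar D.Hbar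
    (fun k a b => D.hess _ _ (by simp)) hqr_prev
  obtain ⟨Q, hQ, N, hN, hQH⟩ := exists_mem_unitaryGroup_mul_fromRows_eq Hmid
    (D.Hbar.submatrix (fun a => (Fin.last (p + 1), a)) (fun b => (Fin.last p, b)))
  obtain ⟨Qhb, hQhb, hNh⟩ := exists_mem_unitaryGroup_mul_blockTriangular Hmid
  rw [← utL_iff_blockTriangular] at hN hNh
  refine ⟨Q.toBlocks₁₁, Q.toBlocks₁₂, Q.toBlocks₂₁, Q.toBlocks₂₂, Qhb, Z, N, Qhb * Hmid,
    mem_unitaryGroup_iff'.1 (trailingTwo_mem_unitaryGroup hQ), mem_unitaryGroup_iff'.1 hQhb,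
    ?_, ?_, hN, hNh, utBig_twoBlock Z hR_ut hN, utBig_twoBlock Z hR_ut hNh⟩
  · rw [hbar, trailingTwo_mul_threeBlock R Z (by rw [fromBlocks_toBlocks]; exact hQH)]
  · rw [BlockArnoldi.Hsq, hsq, extendBot_mul_twoBlock]

/-- (Structure of the QR factorizations of the block upper Hessenberg
matrices.)  Given the QR factorization `Q̄_{j-1} H̄_{j-1} = [R_{j-1}; 0]` of the previous
block Hessenberg matrix, there are unitary transformations `Q_j` (identity outside its
trailing principal `2L×2L` block) and `Q̂_j^(b)` such that
`Q_j · diag(Q̄_{j-1}, I_L) · H̄_j = [R̄_j; 0]` and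
`diag(I_{(j-1)L}, Q̂_j^(b)) · Q̄_{j-1} · H_j = R̂_j` with
`R̄_j = [[R_{j-1}, Z_j],[0, N_j]]` and `R̂_j = [[R_{j-1}, Z_j],[0, N̂_j]]` upper
triangular, sharing the same block `Z_j`, and `N_j`, `N̂_j` upper triangular. -/
theorem stmt3 {n L p : ℕ} (D : BlockArnoldi n L p)
    (Qbar : Matrix (Fin (p+1) × Fin L) (Fin (p+1) × Fin L) ℂ)
    (R : Matrix (Fin p × Fin L) (Fin p × Fin L) ℂ)
    (hQbar_unit : Qbarᴴ * Qbar = 1)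
    (hQbar_base : p = 0 → Qbar = 1)
    (hR_ut : utBig R) (hR_inv : IsUnit R)
    (hqr_prev : Qbar * D.Hprev = stackZero R) :
    ∃ (Q11 Q12 Q21 Q22 Qhb : Matrix (Fin L) (Fin L) ℂ)
      (Z : Matrix (Fin p × Fin L) (Fin L) ℂ) (N Nh : Matrix (Fin L) (Fin L) ℂ),
      (trailingTwo (m := p) Q11 Q12 Q21 Q22)ᴴ * trailingTwo (m := p) Q11 Q12 Q21 Q22 = 1 ∧
      Qhbᴴ * Qhb = 1 ∧
      trailingTwo (m := p) Q11 Q12 Q21 Q22 * (extendOne Qbar * D.Hbar) = threeBlock R Z N 0 ∧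
      extendBot (m := p) Qhb * (Qbar * D.Hsq) = twoBlock R Z Nh ∧
      utL N ∧ utL Nh ∧ utBig (twoBlock R Z N) ∧ utBig (twoBlock R Z Nh) :=
  stmt3_general D Qbar R hR_ut hqr_prev
end
end

section
/- Assume the block setup and QR setup. Then rank C̃_j = rank F_{j−1}^{(G)}; in particular, if F_{j−1}^{(G)} has rank L, then C̃_j is invertible. -/
open Matrix

noncomputable section

set_option maxHeartbeats 1000000

/-! Rotate the least-squares problem of step `j-1` by `Q̄_{j-1}`: the coefficient matrix becomes
`[R_{j-1}; 0]` and the right-hand side `[T; C̃_j]`, so the residual has squared norm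
`‖R_{j-1} Y - T‖² + ‖C̃_j‖²`. As `R_{j-1}` is invertible, the minimizer solves `R_{j-1} Y = T` and
the rotated residual is `[0; C̃_j]`. The Arnoldi relation gives
`F_{j-1}^{(G)} = W_j (E S₀ - H̄_{j-1} Y)`, and neither `W_j` nor `Q̄_{j-1}` (both with orthonormal
columns) changes the rank. -/

section Rank

variable {R l m n : Type*} [CommSemiring R] [StrongRankCondition R] [Fintype l] [Fintype m]
  [Fintype n]

theorem Matrix.rank_mul_eq_right_of_mul_eq_one [DecidableEq m] {U : Matrix l m R}
    {V : Matrix m l R} (h : V * U = 1) (M : Matrix m n R) : (U * M).rank = M.rank := by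
  refine le_antisymm (rank_mul_le_right U M) ?_
  calc M.rank = (V * (U * M)).rank := by rw [← Matrix.mul_assoc, h, Matrix.one_mul]
    _ ≤ (U * M).rank := rank_mul_le_right _ _

theorem Matrix.isUnit_of_rank_eq_card {K : Type*} [Field K] [DecidableEq n] {M : Matrix n n K}
    (h : M.rank = Fintype.card n) : IsUnit M := by
  refine mulVec_surjective_iff_isUnit.mp fun v => ?_
  have hrange : LinearMap.range M.mulVecLin = ⊤ :=
    Submodule.eq_top_of_finrank_eq (by rw [Module.finrank_fintype_fun_eq_card]; exact h)
  exact LinearMap.range_eq_top.mp hrange v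

end Rank

section Frobenius

variable {a b c : Type*} [Fintype a] [Fintype b]

theorem frobSq_eq_zero_iff {M : Matrix a b ℂ} : frobSq M = 0 ↔ M = 0 := by
  have hrow : ∀ r, 0 ≤ ∑ c, Complex.normSq (M r c) := fun r =>
    Finset.sum_nonneg fun _ _ => Complex.normSq_nonneg _
  simp only [frobSq, Finset.sum_eq_zero_iff_of_nonneg (fun r _ => hrow r),
    Finset.sum_eq_zero_iff_of_nonneg (fun _ _ => Complex.normSq_nonneg _), Finset.mem_univ,
    forall_const, Complex.normSq_eq_zero, ← Matrix.ext_iff, Matrix.zero_apply]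

theorem frobSq_neg (M : Matrix a b ℂ) : frobSq (-M) = frobSq M := by
  simp [frobSq]

theorem frobSq_nonneg (M : Matrix a b ℂ) : 0 ≤ frobSq M :=
  Finset.sum_nonneg fun _ _ => Finset.sum_nonneg fun _ _ => Complex.normSq_nonneg _

theorem frobSq_eq_re_trace (M : Matrix a b ℂ) : frobSq M = (Mᴴ * M).trace.re := by
  simp only [frobSq, Matrix.trace, Matrix.diag, Matrix.mul_apply, Matrix.conjTranspose_apply,
    Complex.re_sum, Complex.star_def, ← Complex.normSq_eq_conj_mul_self, Complex.ofReal_re]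
  exact Finset.sum_comm

theorem frobSq_mul_of_conjTranspose_mul_self [Fintype c] [DecidableEq a] {U : Matrix c a ℂ}
    (hU : Uᴴ * U = 1) (M : Matrix a b ℂ) : frobSq (U * M) = frobSq M := by
  rw [frobSq_eq_re_trace, frobSq_eq_re_trace M, Matrix.conjTranspose_mul, Matrix.mul_assoc,
    ← Matrix.mul_assoc Uᴴ, hU, Matrix.one_mul]

end Frobenius

section Vcat

variable {m L : ℕ} {col : Type*}

@[simp]
theorem vcat_apply_castSucc (T : Matrix (Fin m × Fin L) col ℂ) (Bo : Matrix (Fin L) col ℂ)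
    (i : Fin m) (l : Fin L) (c : col) : vcat T Bo (i.castSucc, l) c = T (i, l) c := by
  simp [vcat]

@[simp]
theorem vcat_apply_last (T : Matrix (Fin m × Fin L) col ℂ) (Bo : Matrix (Fin L) col ℂ)
    (l : Fin L) (c : col) : vcat T Bo (Fin.last m, l) c = Bo l c := by
  simp [vcat]

theorem vcat_sub (T T' : Matrix (Fin m × Fin L) col ℂ) (Bo Bo' : Matrix (Fin L) col ℂ) :
    vcat T Bo - vcat T' Bo' = vcat (T - T') (Bo - Bo') := by
  ext ⟨i, l⟩ c
  cases i using Fin.lastCases <;> simp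

theorem vcat_submatrix (M : Matrix (Fin (m+1) × Fin L) col ℂ) :
    vcat (M.submatrix (Prod.map Fin.castSucc id) id) (M.submatrix (Fin.last m, ·) id) = M := by
  ext ⟨i, l⟩ c
  cases i using Fin.lastCases <;> simp

theorem frobSq_vcat [Fintype col] (T : Matrix (Fin m × Fin L) col ℂ)
    (Bo : Matrix (Fin L) col ℂ) : frobSq (vcat T Bo) = frobSq T + frobSq Bo := by
  simp only [frobSq, Fintype.sum_prod_type, Fin.sum_univ_castSucc, vcat_apply_castSucc,
    vcat_apply_last]

theorem stackZero_mul (R : Matrix (Fin m × Fin L) (Fin m × Fin L) ℂ)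
    (Y : Matrix (Fin m × Fin L) col ℂ) : stackZero R * Y = vcat (R * Y) 0 := by
  ext ⟨i, l⟩ c
  cases i using Fin.lastCases <;> simp [stackZero, Matrix.mul_apply]

open ComplexOrder in
theorem rank_vcat_zero (C : Matrix (Fin L) (Fin L) ℂ) :
    (vcat (0 : Matrix (Fin m × Fin L) (Fin L) ℂ) C).rank = C.rank := by
  set V := vcat (0 : Matrix (Fin m × Fin L) (Fin L) ℂ) C
  have hgram : Vᴴ * V = Cᴴ * C := by
    ext a b
    simp [V, Matrix.mul_apply, Fintype.sum_prod_type, Fin.sum_univ_castSucc]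
  rw [← Matrix.rank_conjTranspose_mul_self, hgram, Matrix.rank_conjTranspose_mul_self]

end Vcat

namespace BlockArnoldi

variable {n L p : ℕ} (D : BlockArnoldi n L p)

theorem Wfull_conjTranspose_mul_self : D.Wfullᴴ * D.Wfull = 1 := by
  have hinj : Function.Injective (Prod.map Fin.castSucc id : Fin (p+1) × Fin L → _) :=
    Fin.castSucc_injective _ |>.prodMap Function.injective_id
  rw [Wfull, Matrix.conjTranspose_submatrix, ← Matrix.submatrix_mul _ _ _ _ _
    Function.bijective_id, D.orth, Matrix.submatrix_one _ hinj]

theorem initialResidual_eq : D.B - D.A * D.X0 = D.Wfull * (EL (p+1) L * D.S0) := by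
  have hW : D.Wfull * EL (p+1) L = D.W.submatrix id fun c : Fin L => ((0 : Fin (p+2)), c) := by
    ext r c
    rw [Matrix.mul_apply, Finset.sum_eq_single ((0 : Fin (p+1)), c)]
    · simp [EL, Wfull]
    · rintro ⟨k, l⟩ - hkl
      rw [EL, Matrix.of_apply, if_neg, mul_zero]
      rintro ⟨hk, rfl⟩
      exact hkl (Prod.ext (Fin.ext hk) rfl)
    · simp
  rw [D.F0_eq, ← Matrix.mul_assoc, hW]

theorem A_mul_Wprev : D.A * D.Wprev = D.Wfull * D.Hprev := by
  have hlast : ∀ (l : Fin L) (i : Fin p) (l' : Fin L),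
      D.Hbar (Fin.last (p+1), l) (i.castSucc, l') = 0 := fun l i l' =>
    D.hess _ _ (by simp only [Fin.val_last, Fin.val_castSucc]; omega)
  ext r ⟨i, l⟩
  have harn := congrFun (congrFun D.arnoldi r) (i.castSucc, l)
  simp only [Matrix.mul_apply, Fintype.sum_prod_type] at harn ⊢
  rw [Fin.sum_univ_castSucc (n := p+1)] at harn
  simpa [Wprev, Wfull, Hprev, hlast] using harn

theorem residual_eq (Y : Matrix (Fin p × Fin L) (Fin L) ℂ) :
    D.B - D.A * (D.X0 + D.Wprev * Y) = D.Wfull * (EL (p+1) L * D.S0 - D.Hprev * Y) := by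
  rw [Matrix.mul_add, ← sub_sub, D.initialResidual_eq, ← Matrix.mul_assoc D.A, D.A_mul_Wprev,
    Matrix.mul_assoc, ← Matrix.mul_sub]

end BlockArnoldi

namespace QRSetup

variable {L p : ℕ} {Hbar : Matrix (Fin (p+2) × Fin L) (Fin (p+1) × Fin L) ℂ}
  {S0 : Matrix (Fin L) (Fin L) ℂ} (S : QRSetup L p Hbar S0)

def Ctop : Matrix (Fin p × Fin L) (Fin L) ℂ :=
  (S.Qbar * (EL (p+1) L * S0)).submatrix (Prod.map Fin.castSucc id) id

theorem Qbar_mul_rhs : S.Qbar * (EL (p+1) L * S0) = vcat S.Ctop S.Ct :=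
  (vcat_submatrix _).symm

theorem Qbar_mul_Hprev_mul (Y : Matrix (Fin p × Fin L) (Fin L) ℂ) :
    S.Qbar * (Hbar.submatrix (Prod.map Fin.castSucc id) (Prod.map Fin.castSucc id) * Y) =
      vcat (S.R * Y) 0 := by
  rw [← Matrix.mul_assoc, S.qr_prev, stackZero_mul]

theorem frobSq_lsq_residual (Y : Matrix (Fin p × Fin L) (Fin L) ℂ) :
    frobSq (Hbar.submatrix (Prod.map Fin.castSucc id) (Prod.map Fin.castSucc id) * Y -
        EL (p+1) L * S0) = frobSq (S.R * Y - S.Ctop) + frobSq S.Ct := by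
  rw [← frobSq_mul_of_conjTranspose_mul_self S.Qbar_unit, Matrix.mul_sub, S.Qbar_mul_rhs,
    S.Qbar_mul_Hprev_mul, vcat_sub, frobSq_vcat, zero_sub, frobSq_neg]

theorem R_mul_eq_Ctop_of_isMin {Y : Matrix (Fin p × Fin L) (Fin L) ℂ}
    (hY : ∀ Y' : Matrix (Fin p × Fin L) (Fin L) ℂ,
      frobSq (Hbar.submatrix (Prod.map Fin.castSucc id) (Prod.map Fin.castSucc id) * Y -
          EL (p+1) L * S0) ≤
        frobSq (Hbar.submatrix (Prod.map Fin.castSucc id) (Prod.map Fin.castSucc id) * Y' -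
          EL (p+1) L * S0)) :
    S.R * Y = S.Ctop := by
  obtain ⟨u, hu⟩ := S.R_inv
  set Rinv : Matrix (Fin p × Fin L) (Fin p × Fin L) ℂ := ↑u⁻¹
  have hsolve : S.R * (Rinv * S.Ctop) = S.Ctop := by
    rw [← Matrix.mul_assoc, ← hu, Units.mul_inv, Matrix.one_mul]
  have hle := hY (Rinv * S.Ctop)
  rw [S.frobSq_lsq_residual, S.frobSq_lsq_residual, hsolve, sub_self,
    frobSq_eq_zero_iff.mpr rfl, zero_add, add_le_iff_nonpos_left] at hle
  exact sub_eq_zero.mp (frobSq_eq_zero_iff.mp (le_antisymm hle (frobSq_nonneg _)))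

theorem Qbar_mul_lsq_residual {Y : Matrix (Fin p × Fin L) (Fin L) ℂ} (hY : S.R * Y = S.Ctop) :
    S.Qbar * (EL (p+1) L * S0 -
        Hbar.submatrix (Prod.map Fin.castSucc id) (Prod.map Fin.castSucc id) * Y) =
      vcat 0 S.Ct := by
  rw [Matrix.mul_sub, S.Qbar_mul_rhs, S.Qbar_mul_Hprev_mul, vcat_sub, hY, sub_self, sub_zero]

end QRSetup

/-- `rank C̃_j = rank F_{j-1}^(G)`; in particular, if the previous
block GMRES residual has full rank `L`, then `C̃_j` is invertible. -/
theorem stmt4 {n L p : ℕ} (D : BlockArnoldi n L p) (S : QRSetup L p D.Hbar D.S0)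
    (Yprev : Matrix (Fin p × Fin L) (Fin L) ℂ) (hYprev : IsBlockGMRESprev D Yprev) :
    S.Ct.rank = (D.B - D.A * (D.X0 + D.Wprev * Yprev)).rank ∧
    ((D.B - D.A * (D.X0 + D.Wprev * Yprev)).rank = L → IsUnit S.Ct) := by
  have hsolve : S.R * Yprev = S.Ctop := S.R_mul_eq_Ctop_of_isMin hYprev.1
  have hrank : S.Ct.rank = (D.B - D.A * (D.X0 + D.Wprev * Yprev)).rank := by
    rw [D.residual_eq, Matrix.rank_mul_eq_right_of_mul_eq_one D.Wfull_conjTranspose_mul_self,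
      ← Matrix.rank_mul_eq_right_of_mul_eq_one S.Qbar_unit, BlockArnoldi.Hprev,
      S.Qbar_mul_lsq_residual hsolve, rank_vcat_zero]
  refine ⟨hrank, fun hfull => Matrix.isUnit_of_rank_eq_card ?_⟩
  rw [hrank, hfull, Fintype.card_fin]

end
end

section
/- Assume the block setup and QR setup. Then: (i) rank Ĉ_j = rank C̃_j; (ii) rank C_j ≤ min{rank Q_j^{(11)}, rank C̃_j}; (iii) if C̃_j is invertible (which holds when F_{j−1}^{(G)} has rank L), then Ĉ_j is invertible and C_j is singular if and only if Q_j^{(11)} is singular. -/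
open Matrix

noncomputable section

set_option maxHeartbeats 1000000

/-- (i) `rank Ĉ_j = rank C̃_j`; (ii) `rank C_j ≤ min {rank Q_j^(11),
rank C̃_j}`; (iii) if `C̃_j` is invertible then `Ĉ_j` is invertible and `C_j` is
singular iff `Q_j^(11)` is singular. -/
theorem stmt5 {n L p : ℕ} (D : BlockArnoldi n L p) (S : QRSetup L p D.Hbar D.S0) :
    S.Chat.rank = S.Ct.rank ∧
    S.C.rank ≤ min S.Q11.rank S.Ct.rank ∧
    (IsUnit S.Ct → (IsUnit S.Chat ∧ (¬ IsUnit S.C ↔ ¬ IsUnit S.Q11))) := by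
  have hQhatb : IsUnit S.Qhatb := .of_mul_eq_one_right _ S.Qhatb_unit
  refine ⟨?_, rank_mul_le _ _, fun hCt => ⟨hQhatb.mul hCt, not_congr hCt.mul_right_iff⟩⟩
  exact rank_mul_eq_right_of_isUnit_det _ _ ((isUnit_iff_isUnit_det _).mp hQhatb)

end
end

section
/- Assume the block setup and QR setup, and suppose rank H_j = (j−1)L + r with 1 ≤ r ≤ L. Write H_j = [H̄_{j−1}, L_j], where L_j ∈ ℂ^{jL×L} consists of the last L columns of H_j. Then there exist Ŷ₁ ∈ ℂ^{(j−1)L×L}, an upper triangular Ŷ₂ ∈ ℂ^{r×L} of rank r, a matrix G_j ∈ ℂ^{jL×r} with orthonormal columns satisfying G_jᴴ H̄_{j−1} = 0, and a matrix M̂_j ∈ ℂ^{L×r} with orthonormal columns, such that L_j = H̄_{j−1} Ŷ₁ + G_j Ŷ₂, Z_j = R_{j−1} Ŷ₁, and Ĥ_{jj} = M̂_j Ŷ₂; in particular Ĥ_{jj} has rank r. -/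
open Matrix

noncomputable section

set_option maxHeartbeats 1000000

/-! Multiplying `H_j` on the left by the unitary `Q̄_{j-1}` gives `[[R_{j-1}, Z_j], [0, Ĥ_{jj}]]`
with `R_{j-1}` invertible, so `rank H_j = (j-1)L + rank Ĥ_{jj}` and hence `rank Ĥ_{jj} = r`.
Gram–Schmidt on the columns of `Ĥ_{jj}`, discarding the vectors that become zero, gives a
rank-revealing factorization `Ĥ_{jj} = M̂_j Ŷ₂`. With `Ŷ₁ = R_{j-1}⁻¹ Z_j` and
`G_j = Q̄_{j-1}ᴴ [0; M̂_j]`, the identity `L_j = Q̄_{j-1}ᴴ [Z_j; Ĥ_{jj}]` splits as claimed. -/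

theorem Fin.val_le_val_apply_of_strictMono {k l : ℕ} {f : Fin k → Fin l} (hf : StrictMono f)
    (a : Fin k) : (a : ℕ) ≤ f a := by
  obtain ⟨i, hi⟩ := a
  induction i with
  | zero => exact Nat.zero_le _
  | succ i ih => exact (ih (by omega)).trans_lt (hf (Fin.mk_lt_mk.mpr i.lt_succ_self))

theorem LinearMap.finrank_range_prodMap {K M₁ M₂ M₃ M₄ : Type*} [Field K]
    [AddCommGroup M₁] [AddCommGroup M₂] [AddCommGroup M₃] [AddCommGroup M₄]
    [Module K M₁] [Module K M₂] [Module K M₃] [Module K M₄]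
    [FiniteDimensional K M₃] [FiniteDimensional K M₄] (f : M₁ →ₗ[K] M₃) (g : M₂ →ₗ[K] M₄) :
    Module.finrank K (range (f.prodMap g)) =
      Module.finrank K (range f) + Module.finrank K (range g) := by
  have hinj : Function.Injective ((range f).subtype.prodMap (range g).subtype) :=
    Subtype.val_injective.prodMap Subtype.val_injective
  rw [← Module.finrank_prod, (LinearEquiv.ofInjective _ hinj).finrank_eq, range_prodMap,
    range_prodMap, Submodule.range_subtype, Submodule.range_subtype]

namespace InnerProductSpace

variable {𝕜 E ι : Type*} [RCLike 𝕜] [NormedAddCommGroup E] [InnerProductSpace 𝕜 E]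
  [LinearOrder ι] [LocallyFiniteOrderBot ι] [WellFoundedLT ι]

theorem inner_gramSchmidt_self (f : ι → E) (n : ι) :
    inner 𝕜 (gramSchmidt 𝕜 f n) (f n) = inner 𝕜 (gramSchmidt 𝕜 f n) (gramSchmidt 𝕜 f n) := by
  conv_lhs => rw [gramSchmidt_def'' 𝕜 f n]
  rw [inner_add_right, inner_sum, Finset.sum_eq_zero, add_zero]
  intro i hi
  rw [inner_smul_right, gramSchmidt_orthogonal 𝕜 f (Finset.mem_Iio.mp hi).ne', mul_zero]

theorem inner_gramSchmidtNormed_self_ne_zero {f : ι → E} {n : ι}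
    (hn : gramSchmidtNormed 𝕜 f n ≠ 0) : inner 𝕜 (gramSchmidtNormed 𝕜 f n) (f n) ≠ 0 := by
  have h : gramSchmidt 𝕜 f n ≠ 0 := fun h => hn (by simp [gramSchmidtNormed, h])
  simp [gramSchmidtNormed, inner_smul_left, inner_gramSchmidt_self, h]

end InnerProductSpace

namespace Matrix

theorem rank_mul_eq_right_of_mul_eq_one_s7 {R m n o : Type*} [CommRing R] [StrongRankCondition R]
    [Fintype m] [Fintype n] [Fintype o] [DecidableEq n] {A : Matrix m n R} {B : Matrix n m R}
    (h : B * A = 1) (C : Matrix n o R) : (A * C).rank = C.rank :=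
  le_antisymm (rank_mul_le_right A C) <| by
    simpa [← Matrix.mul_assoc, h] using rank_mul_le_right B (A * C)

theorem rank_fromBlocks_zero_zero {K m n : Type*} [Field K] [Fintype m] [Fintype n]
    [DecidableEq m] [DecidableEq n] (A : Matrix m m K) (D : Matrix n n K) :
    (fromBlocks A 0 0 D).rank = A.rank + D.rank := by
  let b := (Pi.basisFun K m).prod (Pi.basisFun K n)
  have hb : fromBlocks A 0 0 D = LinearMap.toMatrix b b (A.mulVecLin.prodMap D.mulVecLin) := by
    rw [LinearMap.toMatrix_prodMap, LinearMap.toMatrix_eq_toMatrix',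
      LinearMap.toMatrix_eq_toMatrix', ← toLin'_apply', ← toLin'_apply',
      LinearMap.toMatrix'_toLin', LinearMap.toMatrix'_toLin']
  rw [rank_eq_finrank_range_toLin _ b b, hb, toLin_toMatrix, LinearMap.finrank_range_prodMap]
  rfl

theorem rank_fromBlocks_zero₂₁_of_isUnit {K m n : Type*} [Field K] [Fintype m] [Fintype n]
    [DecidableEq m] [DecidableEq n] {A : Matrix m m K} (hA : IsUnit A) (B : Matrix m n K)
    (D : Matrix n n K) : (fromBlocks A B 0 D).rank = Fintype.card m + D.rank := by
  have hAdet : IsUnit A.det := (isUnit_iff_isUnit_det A).mp hA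
  have hfac : fromBlocks A B 0 D = fromBlocks A 0 0 D * fromBlocks 1 (A⁻¹ * B) 0 1 := by
    simp [fromBlocks_multiply, mul_nonsing_inv_cancel_left A B hAdet]
  rw [hfac, rank_mul_eq_left_of_isUnit_det _ _ (by simp), rank_fromBlocks_zero_zero,
    rank_of_isUnit A hA]

open InnerProductSpace in
theorem exists_unitary_mul_upperTriangular {𝕜 : Type*} [RCLike 𝕜] {l : ℕ}
    (H : Matrix (Fin l) (Fin l) 𝕜) :
    ∃ Q T : Matrix (Fin l) (Fin l) 𝕜, Qᴴ * Q = 1 ∧ H = Q * T ∧ T.IsUpperTriangular ∧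
      ∀ i, T i i = 0 → ∀ j, T i j = 0 := by
  let f : Fin l → EuclideanSpace 𝕜 (Fin l) := fun j => WithLp.toLp 2 fun i => H i j
  let e := gramSchmidtOrthonormalBasis (finrank_euclideanSpace (𝕜 := 𝕜) (ι := Fin l)) f
  refine ⟨(EuclideanSpace.basisFun (Fin l) 𝕜).toBasis.toMatrix e,
    of fun i j => inner 𝕜 (e i) (f j), ?_, ?_, ?_, ?_⟩
  · exact mem_unitaryGroup_iff'.mp
      ((EuclideanSpace.basisFun (Fin l) 𝕜).toMatrix_orthonormalBasis_mem_unitary e)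
  · ext i j
    have h := congrArg (fun v : EuclideanSpace 𝕜 (Fin l) => v i) (e.sum_repr' (f j))
    simp only [WithLp.ofLp_sum, WithLp.ofLp_smul, Finset.sum_apply, Pi.smul_apply,
      smul_eq_mul] at h
    simpa [mul_apply, Module.Basis.toMatrix_apply, mul_comm] using h.symm
  · intro i j hij
    exact gramSchmidtOrthonormalBasis_inv_triangular _ f hij
  · intro i hi j
    by_cases h : gramSchmidtNormed 𝕜 f i = 0
    · exact inner_gramSchmidtOrthonormalBasis_eq_zero _ h j
    · rw [of_apply, show e i = _ from gramSchmidtOrthonormalBasis_apply _ h] at hi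
      exact absurd hi (inner_gramSchmidtNormed_self_ne_zero h)

theorem exists_isometry_mul_upperTrapezoidal_of_upperTriangular {K : Type*} [Field K]
    [StarRing K] {l : ℕ} (Q T : Matrix (Fin l) (Fin l) K) (hQ : Qᴴ * Q = 1)
    (hT : T.IsUpperTriangular) (hpiv : ∀ i, T i i = 0 → ∀ j, T i j = 0) :
    ∃ (k : ℕ) (M : Matrix (Fin l) (Fin k) K) (Y : Matrix (Fin k) (Fin l) K),
      Mᴴ * M = 1 ∧ Q * T = M * Y ∧ (∀ (a : Fin k) (b : Fin l), (b : ℕ) < a → Y a b = 0) ∧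
        Y.rank = k := by
  classical
  let s := Finset.univ.filter fun i => T i i ≠ 0
  let σ := s.orderEmbOfFin rfl
  refine ⟨s.card, Q.submatrix id σ, T.submatrix σ id, ?_, ?_, ?_, ?_⟩
  · rw [conjTranspose_submatrix, ← submatrix_mul _ _ _ _ _ Function.bijective_id, hQ]
    exact submatrix_one_embedding σ.toEmbedding
  · ext x b
    have hzero : ∀ i ∉ s, Q x i * T i b = 0 := fun i hi => by
      rw [hpiv i (by simpa [s] using hi), mul_zero]
    calc (Q * T) x b = ∑ i ∈ s, Q x i * T i b :=
          (Finset.sum_subset (Finset.subset_univ s) fun i _ => hzero i).symm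
      _ = ∑ i ∈ Finset.univ.map σ.toEmbedding, Q x i * T i b := by
          rw [s.map_orderEmbOfFin_univ rfl]
      _ = _ := Finset.sum_map _ _ _
  · intro a b hba
    exact hT (hba.trans_le (Fin.val_le_val_apply_of_strictMono σ.strictMono a))
  · refine le_antisymm (by simpa using rank_le_card_height (T.submatrix σ id)) ?_
    have hdet : (T.submatrix σ σ).det ≠ 0 := by
      rw [det_of_isUpperTriangular (M := T.submatrix σ σ) fun i j hij => hT (σ.strictMono hij)]
      exact Finset.prod_ne_zero_iff.mpr fun a _ =>
        (Finset.mem_filter.mp (s.orderEmbOfFin_mem rfl a)).2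
    have hrank : (T.submatrix σ σ).rank = s.card := by
      rw [rank_of_det_ne_zero hdet, Fintype.card_fin]
    exact hrank.ge.trans (rank_submatrix_le (T.submatrix σ id) id σ)

theorem exists_isometry_mul_upperTrapezoidal {𝕜 : Type*} [RCLike 𝕜] {l : ℕ}
    (H : Matrix (Fin l) (Fin l) 𝕜) :
    ∃ (M : Matrix (Fin l) (Fin H.rank) 𝕜) (Y : Matrix (Fin H.rank) (Fin l) 𝕜),
      Mᴴ * M = 1 ∧ H = M * Y ∧ (∀ (a : Fin H.rank) (b : Fin l), (b : ℕ) < a → Y a b = 0) ∧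
        Y.rank = H.rank := by
  obtain ⟨Q, T, hQ, rfl, hT, hpiv⟩ := exists_unitary_mul_upperTriangular H
  obtain ⟨k, M, Y, hM, hMY, hY, hYrank⟩ :=
    exists_isometry_mul_upperTrapezoidal_of_upperTriangular Q T hQ hT hpiv
  obtain rfl : (Q * T).rank = k := by rw [hMY, rank_mul_eq_right_of_mul_eq_one_s7 hM, hYrank]
  exact ⟨M, Y, hM, hMY, hY, hYrank⟩

end Matrix

def blockRowEquiv (p L : ℕ) : (Fin p × Fin L) ⊕ Fin L ≃ Fin (p + 1) × Fin L where
  toFun := Sum.elim (Prod.map Fin.castSucc id) (Prod.mk (Fin.last p))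
  invFun x := Fin.lastCases (Sum.inr x.2) (fun i => Sum.inl (i, x.2)) x.1
  left_inv := by rintro (⟨i, a⟩ | a) <;> simp
  right_inv := by rintro ⟨i, a⟩; induction i using Fin.lastCases <;> simp

section BlockMatrices

variable {p L : ℕ}

theorem vcat_eq_submatrix_fromRows {n : Type*} (T : Matrix (Fin p × Fin L) n ℂ)
    (B : Matrix (Fin L) n ℂ) :
    vcat T B = (fromRows T B).submatrix (blockRowEquiv p L).symm id := by
  ext ⟨i, a⟩ c
  induction i using Fin.lastCases <;> simp [vcat, blockRowEquiv]

theorem stackZero_eq_vcat (R : Matrix (Fin p × Fin L) (Fin p × Fin L) ℂ) :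
    stackZero R = vcat R 0 := by
  ext ⟨i, a⟩ c
  induction i using Fin.lastCases <;> simp [vcat, stackZero]

theorem vcat_add {n : Type*} (T T' : Matrix (Fin p × Fin L) n ℂ) (B B' : Matrix (Fin L) n ℂ) :
    vcat T B + vcat T' B' = vcat (T + T') (B + B') := by
  ext ⟨i, a⟩ c
  induction i using Fin.lastCases <;> simp [vcat]

theorem vcat_mul {n o : Type*} [Fintype n] (T : Matrix (Fin p × Fin L) n ℂ)
    (B : Matrix (Fin L) n ℂ) (C : Matrix n o ℂ) : vcat T B * C = vcat (T * C) (B * C) := by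
  rw [vcat_eq_submatrix_fromRows, vcat_eq_submatrix_fromRows, ← fromRows_mul,
    submatrix_mul _ _ _ _ _ Function.bijective_id, submatrix_id_id]

theorem conjTranspose_vcat_mul_vcat {n o : Type*} (T : Matrix (Fin p × Fin L) n ℂ)
    (B : Matrix (Fin L) n ℂ) (T' : Matrix (Fin p × Fin L) o ℂ) (B' : Matrix (Fin L) o ℂ) :
    (vcat T B)ᴴ * vcat T' B' = Tᴴ * T' + Bᴴ * B' := by
  rw [vcat_eq_submatrix_fromRows, vcat_eq_submatrix_fromRows, conjTranspose_submatrix,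
    submatrix_mul_equiv, conjTranspose_fromRows_eq_fromCols_conjTranspose, fromCols_mul_fromRows,
    submatrix_id_id]

theorem twoBlock_eq_submatrix_fromBlocks (R : Matrix (Fin p × Fin L) (Fin p × Fin L) ℂ)
    (Z : Matrix (Fin p × Fin L) (Fin L) ℂ) (N : Matrix (Fin L) (Fin L) ℂ) :
    twoBlock R Z N =
      (fromBlocks R Z 0 N).submatrix (blockRowEquiv p L).symm (blockRowEquiv p L).symm := by
  ext ⟨i, a⟩ ⟨j, b⟩
  induction i using Fin.lastCases <;> induction j using Fin.lastCases <;>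
    simp [twoBlock, blockRowEquiv]

theorem rank_twoBlock {R : Matrix (Fin p × Fin L) (Fin p × Fin L) ℂ} (hR : IsUnit R)
    (Z : Matrix (Fin p × Fin L) (Fin L) ℂ) (N : Matrix (Fin L) (Fin L) ℂ) :
    (twoBlock R Z N).rank = p * L + N.rank := by
  rw [twoBlock_eq_submatrix_fromBlocks, rank_submatrix, rank_fromBlocks_zero₂₁_of_isUnit hR,
    Fintype.card_prod, Fintype.card_fin, Fintype.card_fin]

theorem twoBlock_submatrix_last (R : Matrix (Fin p × Fin L) (Fin p × Fin L) ℂ)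
    (Z : Matrix (Fin p × Fin L) (Fin L) ℂ) (N : Matrix (Fin L) (Fin L) ℂ) :
    (twoBlock R Z N).submatrix id (Prod.mk (Fin.last p)) = vcat Z N := by
  ext ⟨i, a⟩ c
  induction i using Fin.lastCases <;> simp [twoBlock, vcat]

theorem threeBlock_submatrix_castSucc (R : Matrix (Fin p × Fin L) (Fin p × Fin L) ℂ)
    (Z : Matrix (Fin p × Fin L) (Fin L) ℂ) (Hmid Hbot : Matrix (Fin L) (Fin L) ℂ) :
    (threeBlock R Z Hmid Hbot).submatrix (Prod.map Fin.castSucc id) id = twoBlock R Z Hmid := by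
  ext ⟨i, a⟩ ⟨j, b⟩
  induction i using Fin.lastCases <;> induction j using Fin.lastCases <;>
    simp [twoBlock, threeBlock]

theorem extendOne_mul_submatrix_castSucc {n : Type*}
    (Q : Matrix (Fin p × Fin L) (Fin p × Fin L) ℂ) (M : Matrix (Fin (p + 1) × Fin L) n ℂ) :
    (extendOne Q * M).submatrix (Prod.map Fin.castSucc id) id =
      Q * M.submatrix (Prod.map Fin.castSucc id) id := by
  ext ⟨i, a⟩ c
  simp [mul_apply, Fintype.sum_prod_type, Fin.sum_univ_castSucc, extendOne]

end BlockMatrices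

namespace QRSetup

variable {L p : ℕ} {Hbar : Matrix (Fin (p+2) × Fin L) (Fin (p+1) × Fin L) ℂ}
  {S0 : Matrix (Fin L) (Fin L) ℂ} (S : QRSetup L p Hbar S0)

theorem Qbar_mul_submatrix_castSucc :
    S.Qbar * Hbar.submatrix (Prod.map Fin.castSucc id) id = twoBlock S.R S.Z S.Hhat := by
  rw [← extendOne_mul_submatrix_castSucc, S.qr_split, threeBlock_submatrix_castSucc]

theorem rank_submatrix_castSucc :
    (Hbar.submatrix (Prod.map Fin.castSucc id) id).rank = p * L + S.Hhat.rank := by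
  rw [← rank_mul_eq_right_of_isUnit_det _ _ (isUnit_det_of_left_inverse S.Qbar_unit),
    S.Qbar_mul_submatrix_castSucc, rank_twoBlock S.R_inv]

theorem submatrix_castSucc_castSucc_eq :
    Hbar.submatrix (Prod.map Fin.castSucc id) (Prod.map Fin.castSucc id) =
      S.Qbarᴴ * vcat S.R 0 := by
  rw [← stackZero_eq_vcat, ← S.qr_prev, ← Matrix.mul_assoc, S.Qbar_unit, Matrix.one_mul]

theorem submatrix_castSucc_last_eq :
    Hbar.submatrix (Prod.map Fin.castSucc id) (Prod.mk (Fin.last p)) =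
      S.Qbarᴴ * vcat S.Z S.Hhat := by
  rw [← twoBlock_submatrix_last, ← S.Qbar_mul_submatrix_castSucc, ← submatrix_id_id S.Qbarᴴ,
    ← submatrix_mul _ _ _ _ _ Function.bijective_id, ← Matrix.mul_assoc, S.Qbar_unit,
    Matrix.one_mul]
  rfl

end QRSetup

theorem stmt7_general {n L p : ℕ} (D : BlockArnoldi n L p) (S : QRSetup L p D.Hbar D.S0)
    (r : ℕ) (hrank : D.Hsq.rank = p * L + r) :
    ∃ (Y1 : Matrix (Fin p × Fin L) (Fin L) ℂ) (Y2 : Matrix (Fin r) (Fin L) ℂ)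
      (G : Matrix (Fin (p+1) × Fin L) (Fin r) ℂ) (Mh : Matrix (Fin L) (Fin r) ℂ),
      (∀ (a : Fin r) (b : Fin L), (b : ℕ) < (a : ℕ) → Y2 a b = 0) ∧
      Y2.rank = r ∧
      Gᴴ * G = 1 ∧
      Gᴴ * D.Hprev = 0 ∧
      Mhᴴ * Mh = 1 ∧
      (Matrix.of fun (rr : Fin (p+1) × Fin L) (c : Fin L) => D.Hsq rr (Fin.last p, c))
        = D.Hprev * Y1 + G * Y2 ∧
      S.Z = S.R * Y1 ∧
      S.Hhat = Mh * Y2 ∧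
      S.Hhat.rank = r := by
  obtain rfl : S.Hhat.rank = r := by
    have : D.Hsq.rank = p * L + S.Hhat.rank := S.rank_submatrix_castSucc
    omega
  obtain ⟨Mh, Y2, hMh, hHhat, hY2, hY2rank⟩ := S.Hhat.exists_isometry_mul_upperTrapezoidal
  have hQ : S.Qbar * S.Qbarᴴ = 1 := mul_eq_one_comm.mp S.Qbar_unit
  have hHprev : D.Hprev = S.Qbarᴴ * vcat S.R 0 := S.submatrix_castSucc_castSucc_eq
  have hRZ : S.R * (S.R⁻¹ * S.Z) = S.Z :=
    mul_nonsing_inv_cancel_left _ _ ((isUnit_iff_isUnit_det _).mp S.R_inv)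
  -- without the ascription on `0`, `*` elaborates through the `CStarMatrix` instance
  refine ⟨S.R⁻¹ * S.Z, Y2, S.Qbarᴴ * vcat (0 : Matrix (Fin p × Fin L) _ ℂ) Mh, Mh, hY2,
    hY2rank, ?_, ?_, hMh, S.submatrix_castSucc_last_eq.trans ?_, hRZ.symm, hHhat, rfl⟩
  · rw [conjTranspose_mul, conjTranspose_conjTranspose, Matrix.mul_assoc,
      ← Matrix.mul_assoc S.Qbar, hQ, Matrix.one_mul, conjTranspose_vcat_mul_vcat, hMh]
    simp
  · rw [hHprev, conjTranspose_mul, conjTranspose_conjTranspose, Matrix.mul_assoc,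
      ← Matrix.mul_assoc S.Qbar, hQ, Matrix.one_mul, conjTranspose_vcat_mul_vcat]
    simp
  · rw [hHprev, Matrix.mul_assoc, Matrix.mul_assoc, ← Matrix.mul_add, vcat_mul, vcat_mul,
      vcat_add, hRZ, ← hHhat]
    simp

/-- If `rank H_j = (j-1)L + r` with `1 ≤ r ≤ L`, then the last `L`
columns `L_j` of `H_j` decompose as `L_j = H̄_{j-1} Ŷ₁ + G_j Ŷ₂` with `G_j` having
orthonormal columns orthogonal to the range of `H̄_{j-1}`, `Ŷ₂` upper triangular of
rank `r`, and moreover `Z_j = R_{j-1} Ŷ₁` and `Ĥ_{jj} = M̂_j Ŷ₂` with `M̂_j` having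
orthonormal columns; in particular `Ĥ_{jj}` has rank `r`. -/
theorem stmt7 {n L p : ℕ} (D : BlockArnoldi n L p) (S : QRSetup L p D.Hbar D.S0)
    (r : ℕ) (hr1 : 1 ≤ r) (hrL : r ≤ L)
    (hrank : D.Hsq.rank = p * L + r) :
    ∃ (Y1 : Matrix (Fin p × Fin L) (Fin L) ℂ) (Y2 : Matrix (Fin r) (Fin L) ℂ)
      (G : Matrix (Fin (p+1) × Fin L) (Fin r) ℂ) (Mh : Matrix (Fin L) (Fin r) ℂ),
      (∀ (a : Fin r) (b : Fin L), (b : ℕ) < (a : ℕ) → Y2 a b = 0) ∧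
      Y2.rank = r ∧
      Gᴴ * G = 1 ∧
      Gᴴ * D.Hprev = 0 ∧
      Mhᴴ * Mh = 1 ∧
      (Matrix.of fun (rr : Fin (p+1) × Fin L) (c : Fin L) => D.Hsq rr (Fin.last p, c))
        = D.Hprev * Y1 + G * Y2 ∧
      S.Z = S.R * Y1 ∧
      S.Hhat = Mh * Y2 ∧
      S.Hhat.rank = r :=
  stmt7_general D S r hrank
end
end

section
/- Assume the block setup and QR setup, and suppose C̃_j is invertible (which holds when F_{j−1}^{(G)} has rank L). Then rank C_j = rank N̂_j. -/
open Matrix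

noncomputable section

set_option maxHeartbeats 1000000

/-!
Since `Q_j` is unitary and `Q_j · diag(Q̄_{j-1}, I_L) · H̄_j = [R̄_j; 0]`, reading off block row
`j`, block column `j` of `diag(Q̄_{j-1}, I_L) · H̄_j = Q_jᴴ [R̄_j; 0]` gives
`Ĥ_{jj} = (Q_j^{(11)})ᴴ N_j`. Multiplying by the invertible `C̃_j` and `N_j` and by the unitary
`Q̂_j^{(b)}` does not change ranks, so
`rank C_j = rank Q_j^{(11)} = rank ((Q_j^{(11)})ᴴ N_j) = rank Ĥ_{jj} = rank N̂_j`.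
-/

lemma trailingTwo_conjTranspose_mul_apply {m L : ℕ} {col : Type*}
    (Q11 Q12 Q21 Q22 : Matrix (Fin L) (Fin L) ℂ) (M : Matrix (Fin (m+2) × Fin L) col ℂ)
    (a : Fin L) (c : col) :
    ((trailingTwo (m := m) Q11 Q12 Q21 Q22)ᴴ * M) ((Fin.last m).castSucc, a) c =
      ∑ k, star (Q11 k a) * M ((Fin.last m).castSucc, k) c +
        ∑ k, star (Q21 k a) * M (Fin.last (m+1), k) c := by
  rw [mul_apply, Fintype.sum_prod_type, Fin.sum_univ_castSucc, Fin.sum_univ_castSucc]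
  simp [trailingTwo]

lemma threeBlock_apply_castSucc_last {m L : ℕ} (R : Matrix (Fin m × Fin L) (Fin m × Fin L) ℂ)
    (Z : Matrix (Fin m × Fin L) (Fin L) ℂ) (Hmid Hbot : Matrix (Fin L) (Fin L) ℂ) (a b : Fin L) :
    threeBlock R Z Hmid Hbot ((Fin.last m).castSucc, a) (Fin.last m, b) = Hmid a b := by
  simp [threeBlock]

lemma threeBlock_apply_last_last {m L : ℕ} (R : Matrix (Fin m × Fin L) (Fin m × Fin L) ℂ)
    (Z : Matrix (Fin m × Fin L) (Fin L) ℂ) (Hmid Hbot : Matrix (Fin L) (Fin L) ℂ) (a b : Fin L) :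
    threeBlock R Z Hmid Hbot (Fin.last (m+1), a) (Fin.last m, b) = Hbot a b := by
  simp [threeBlock]

namespace QRSetup

variable {L p : ℕ} {Hbar : Matrix (Fin (p+2) × Fin L) (Fin (p+1) × Fin L) ℂ}
  {S0 : Matrix (Fin L) (Fin L) ℂ}

lemma threeBlock_eq_conjTranspose_mul (S : QRSetup L p Hbar S0) :
    threeBlock S.R S.Z S.Hhat S.Hsub =
      (trailingTwo (m := p) S.Q11 S.Q12 S.Q21 S.Q22)ᴴ * threeBlock S.R S.Z S.N 0 := by
  rw [← S.qr_full, ← Matrix.mul_assoc, S.Qj_unit, Matrix.one_mul, S.qr_split]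

lemma Hhat_eq_conjTranspose_Q11_mul_N (S : QRSetup L p Hbar S0) :
    S.Hhat = S.Q11ᴴ * S.N := by
  ext a b
  have h := congrFun₂ S.threeBlock_eq_conjTranspose_mul ((Fin.last p).castSucc, a) (Fin.last p, b)
  rw [threeBlock_apply_castSucc_last, trailingTwo_conjTranspose_mul_apply] at h
  simpa [threeBlock_apply_castSucc_last, threeBlock_apply_last_last, mul_apply] using h

end QRSetup

/-- If `C̃_j` is invertible (which holds when `F_{j-1}^(G)` has
rank `L`), then `rank C_j = rank N̂_j`. -/
theorem stmt9 {n L p : ℕ} (D : BlockArnoldi n L p) (S : QRSetup L p D.Hbar D.S0)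
    (hCt : IsUnit S.Ct) :
    S.C.rank = S.Nhat.rank := by
  open ComplexOrder in
  calc S.C.rank = S.Q11.rank :=
        rank_mul_eq_left_of_isUnit_det _ _ ((isUnit_iff_isUnit_det _).mp hCt)
    _ = (S.Q11ᴴ * S.N).rank := by
        rw [rank_mul_eq_left_of_isUnit_det _ _ ((isUnit_iff_isUnit_det _).mp S.N_inv),
          rank_conjTranspose]
    _ = S.Nhat.rank := by
        rw [← S.Hhat_eq_conjTranspose_Q11_mul_N, S.Nhat_def,
          rank_mul_eq_right_of_isUnit_det _ _ (isUnit_det_of_left_inverse S.Qhatb_unit)]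

end
end
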